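/- arXiv:1701.07286 — 9 statements merged into one kernel-verified Lean document; each statement's English description precedes it below -/
import Mathlib

section
/- Let $m \geq 1$ be an integer, $A \subseteq \mathbb{R}^m$, $a \in \mathbb{R}^m$, $f : A \to \mathbb{R}^{n-m}$, $\gamma \geq 1$, $0 < M < \infty$ and $0 \leq \lambda < \infty$. If $\limsup_{r \to 0^+} \frac{\mathcal{L}^m(\mathbf{B}(a,r) \cap \{x : |f(x)| > \lambda r^\gamma\})}{\alpha(m) r^m} < M$, then $\limsup_{r\to 0^+} \frac{\mathcal{L}^m(\mathbf{B}(a,r) \cap \{x : |f(x)| > 2^\gamma \lambda |x-a|^\gamma\})}{\alpha(m) r^m} < M (1-2^{-m})^{-1}$. -/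
/-!
Split the ball `B(a, r)` into the dyadic shells `r / 2^(k+1) < |x - a| ≤ r / 2^k`. On the `k`-th
shell, `2^γ λ |x - a|^γ ≥ λ (r / 2^k)^γ`, so the exceptional set of the conclusion is covered,
up to the null set `{a}`, by the exceptional sets of the hypothesis at the radii `r / 2^k`. Their
measures are eventually at most `c α(m) (r / 2^k)^m` for some `c < M`, and summing the geometric
series gives the factor `(1 - 2^(-m))⁻¹`.
-/

open MeasureTheory Metric Filter Set
open scoped ENNReal Topology

/-- Volume of the unit ball in `ℝ^m`, i.e. `α(m)`. -/
noncomputable def ballVol (m : ℕ) : ℝ≥0∞ :=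
  volume (Metric.closedBall (0 : EuclideanSpace ℝ (Fin m)) 1)

theorem Filter.Eventually.forall_Ioc_of_nhdsGT {α : Type*} [TopologicalSpace α] [LinearOrder α]
    [OrderTopology α] [NoMaxOrder α] {a : α} {P : α → Prop}
    (h : ∀ᶠ r in 𝓝[>] a, P r) : ∀ᶠ r in 𝓝[>] a, ∀ s ∈ Ioc a r, P s := by
  obtain ⟨u, hu, hsub⟩ := mem_nhdsGT_iff_exists_Ioo_subset.1 h
  filter_upwards [Ioo_mem_nhdsGT hu] with r hr s hs
  exact hsub ⟨hs.1, hs.2.trans_lt hr.2⟩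

theorem exists_le_div_two_pow_lt_two_mul {t r : ℝ} (ht : 0 < t) (htr : t ≤ r) :
    ∃ k : ℕ, t ≤ r / 2 ^ k ∧ r / 2 ^ k < 2 * t := by
  obtain ⟨k, hk, hk'⟩ := exists_nat_pow_near ((one_le_div ht).2 htr) one_lt_two
  refine ⟨k, ?_, ?_⟩
  · rw [le_div_iff₀ (by positivity), mul_comm]
    exact (le_div_iff₀ ht).1 hk
  · calc r / 2 ^ k < 2 ^ (k + 1) * t / 2 ^ k := by gcongr; exact (div_lt_iff₀ ht).1 hk'
      _ = 2 * t := by field_simp; ring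

theorem tsum_ofReal_div_two_pow_pow (r : ℝ) (m : ℕ) :
    ∑' k : ℕ, ENNReal.ofReal ((r / 2 ^ k) ^ m) = ENNReal.ofReal (r ^ m) * (1 - 2⁻¹ ^ m)⁻¹ := by
  have hterm (k : ℕ) :
      ENNReal.ofReal ((r / 2 ^ k) ^ m) = ENNReal.ofReal (r ^ m) * (2⁻¹ ^ m) ^ k := by
    rw [show (r / 2 ^ k) ^ m = r ^ m * (2⁻¹ ^ m) ^ k by
        rw [div_eq_mul_inv, mul_pow, ← inv_pow, ← pow_mul, ← pow_mul, mul_comm k],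
      ENNReal.ofReal_mul' (by positivity), ENNReal.ofReal_pow (by positivity : (0 : ℝ) ≤ 2⁻¹ ^ m),
      ENNReal.ofReal_pow (by norm_num : (0 : ℝ) ≤ 2⁻¹), ENNReal.ofReal_inv_of_pos two_pos,
      ENNReal.ofReal_ofNat]
  simp_rw [hterm, ENNReal.tsum_mul_left, ENNReal.tsum_geometric]

theorem ofReal_mul_inv_one_sub_two_rpow_neg (M : ℝ) {m : ℕ} (hm : 1 ≤ m) :
    ENNReal.ofReal (M * (1 - (2 : ℝ) ^ (-(m : ℝ)))⁻¹) = ENNReal.ofReal M * (1 - 2⁻¹ ^ m)⁻¹ := by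
  have hlt : (2 : ℝ)⁻¹ ^ m < 1 := pow_lt_one₀ (by norm_num) (by norm_num) (by omega)
  rw [Real.rpow_neg zero_le_two, Real.rpow_natCast, ← inv_pow,
    ENNReal.ofReal_mul' (inv_nonneg.2 (sub_nonneg.2 hlt.le)),
    ENNReal.ofReal_inv_of_pos (by linarith), ENNReal.ofReal_sub _ (by positivity),
    ENNReal.ofReal_one, ENNReal.ofReal_pow (by positivity), ENNReal.ofReal_inv_of_pos two_pos,
    ENNReal.ofReal_ofNat]

section DyadicShells

variable {E : Type*} [NormedAddCommGroup E] (A : Set E) (a : E) (g : E → ℝ) {γ lam : ℝ}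

theorem subset_singleton_union_iUnion_dyadic (hγ : 0 ≤ γ) (hlam : 0 ≤ lam) (r : ℝ) :
    {x | x ∈ A ∧ 2 ^ γ * lam * ‖x - a‖ ^ γ < g x} ∩ closedBall a r ⊆
      {a} ∪ ⋃ k : ℕ, {x | x ∈ A ∧ lam * (r / 2 ^ k) ^ γ < g x} ∩ closedBall a (r / 2 ^ k) := by
  rintro x ⟨⟨hxA, hxg⟩, hxr⟩
  rcases eq_or_ne x a with rfl | hxa
  · exact Or.inl rfl
  rw [mem_closedBall, dist_eq_norm] at hxr
  obtain ⟨k, hle, hlt⟩ :=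
    exists_le_div_two_pow_lt_two_mul (norm_pos_iff.2 (sub_ne_zero.2 hxa)) hxr
  refine Or.inr (mem_iUnion.2 ⟨k, ⟨hxA, ?_⟩, by rwa [mem_closedBall, dist_eq_norm]⟩)
  calc lam * (r / 2 ^ k) ^ γ ≤ lam * (2 * ‖x - a‖) ^ γ := by
        gcongr; exact (norm_nonneg _).trans hle
    _ = 2 ^ γ * lam * ‖x - a‖ ^ γ := by rw [Real.mul_rpow zero_le_two (norm_nonneg _)]; ring
    _ < g x := hxg

theorem measure_le_of_forall_dyadic [MeasurableSpace E] (μ : Measure E) [NullSingletonClass μ]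
    (hγ : 0 ≤ γ) (hlam : 0 ≤ lam) (m : ℕ) (C : ℝ≥0∞) (r : ℝ)
    (hC : ∀ k : ℕ, μ ({x | x ∈ A ∧ lam * (r / 2 ^ k) ^ γ < g x} ∩ closedBall a (r / 2 ^ k)) ≤
      C * ENNReal.ofReal ((r / 2 ^ k) ^ m)) :
    μ ({x | x ∈ A ∧ 2 ^ γ * lam * ‖x - a‖ ^ γ < g x} ∩ closedBall a r) ≤
      C * ENNReal.ofReal (r ^ m) * (1 - 2⁻¹ ^ m)⁻¹ := by
  calc _ ≤ μ ({a} ∪ ⋃ k : ℕ,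
          {x | x ∈ A ∧ lam * (r / 2 ^ k) ^ γ < g x} ∩ closedBall a (r / 2 ^ k)) :=
        measure_mono (subset_singleton_union_iUnion_dyadic A a g hγ hlam r)
    _ ≤ μ {a} + ∑' k : ℕ,
          μ ({x | x ∈ A ∧ lam * (r / 2 ^ k) ^ γ < g x} ∩ closedBall a (r / 2 ^ k)) :=
        (measure_union_le _ _).trans (by gcongr; exact measure_iUnion_le _)
    _ ≤ 0 + ∑' k : ℕ, C * ENNReal.ofReal ((r / 2 ^ k) ^ m) := by
        rw [measure_singleton]; gcongr with k; exact hC k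
    _ = C * ENNReal.ofReal (r ^ m) * (1 - 2⁻¹ ^ m)⁻¹ := by
        rw [zero_add, ENNReal.tsum_mul_left, tsum_ofReal_div_two_pow_pow, mul_assoc]

end DyadicShells

theorem stmt0_general {m : ℕ} (hm : 1 ≤ m) {F : Type*} [NormedAddCommGroup F]
    (A : Set (EuclideanSpace ℝ (Fin m))) (a : EuclideanSpace ℝ (Fin m))
    (f : EuclideanSpace ℝ (Fin m) → F) (γ : ℝ) (hγ : 1 ≤ γ)
    (M : ℝ) (lam : ℝ) (hlam : 0 ≤ lam)
    (h : Filter.limsup (fun r : ℝ =>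
        volume ({x | x ∈ A ∧ lam * r ^ γ < ‖f x‖} ∩ Metric.closedBall a r) /
          (ballVol m * ENNReal.ofReal (r ^ m))) (𝓝[>] (0 : ℝ))
        < ENNReal.ofReal M) :
    Filter.limsup (fun r : ℝ =>
        volume ({x | x ∈ A ∧ (2 : ℝ) ^ γ * lam * ‖x - a‖ ^ γ < ‖f x‖} ∩
            Metric.closedBall a r) /
          (ballVol m * ENNReal.ofReal (r ^ m))) (𝓝[>] (0 : ℝ))
        < ENNReal.ofReal (M * (1 - (2 : ℝ) ^ (-(m : ℝ)))⁻¹) := by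
  have : Nonempty (Fin m) := ⟨⟨0, hm⟩⟩
  set K : ℝ≥0∞ := (1 - 2⁻¹ ^ m)⁻¹
  have hK0 : K ≠ 0 := ENNReal.inv_ne_zero.2 (ne_top_of_le_ne_top ENNReal.one_ne_top tsub_le_self)
  have hKtop : K ≠ ∞ := ENNReal.inv_ne_top.2 (tsub_pos_of_lt
    (pow_lt_one₀ bot_le (ENNReal.inv_lt_one.2 ENNReal.one_lt_two) (by omega))).ne'
  have hball : ballVol m ≠ ∞ := measure_closedBall_lt_top.ne
  obtain ⟨c, hc, hcM⟩ := exists_between h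
  have hsmall : ∀ᶠ r in 𝓝[>] (0 : ℝ),
      volume ({x | x ∈ A ∧ lam * r ^ γ < ‖f x‖} ∩ closedBall a r) ≤
        c * ballVol m * ENNReal.ofReal (r ^ m) :=
    (eventually_lt_of_limsup_lt hc).mono fun r hr => by
      rw [mul_assoc]
      exact (ENNReal.div_le_iff_le_mul (Or.inr hcM.ne_top)
        (Or.inl (ENNReal.mul_ne_top hball ENNReal.ofReal_ne_top))).1 hr.le
  have hlarge : ∀ᶠ r in 𝓝[>] (0 : ℝ),
      volume ({x | x ∈ A ∧ (2 : ℝ) ^ γ * lam * ‖x - a‖ ^ γ < ‖f x‖} ∩ closedBall a r) /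
        (ballVol m * ENNReal.ofReal (r ^ m)) ≤ c * K :=
    (hsmall.forall_Ioc_of_nhdsGT.and self_mem_nhdsWithin).mono fun r ⟨hr, hr0⟩ => by
      refine ENNReal.div_le_of_le_mul ?_
      calc _ ≤ c * ballVol m * ENNReal.ofReal (r ^ m) * K :=
            measure_le_of_forall_dyadic A a (fun x => ‖f x‖) volume (by linarith) hlam m _ r
              fun k => hr _ ⟨by positivity, div_le_self hr0.le (one_le_pow₀ one_le_two)⟩
        _ = c * K * (ballVol m * ENNReal.ofReal (r ^ m)) := by ring
  calc _ ≤ c * K := limsup_le_of_le (by isBoundedDefault) hlarge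
    _ < ENNReal.ofReal M * K := ENNReal.mul_lt_mul_left hK0 hKtop hcM
    _ = _ := (ofReal_mul_inv_one_sub_two_rpow_neg M hm).symm

theorem stmt0 {m : ℕ} (hm : 1 ≤ m) {F : Type*} [NormedAddCommGroup F]
    (A : Set (EuclideanSpace ℝ (Fin m))) (a : EuclideanSpace ℝ (Fin m))
    (f : EuclideanSpace ℝ (Fin m) → F) (γ : ℝ) (hγ : 1 ≤ γ)
    (M : ℝ) (hM : 0 < M) (lam : ℝ) (hlam : 0 ≤ lam)
    (h : Filter.limsup (fun r : ℝ =>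
        volume ({x | x ∈ A ∧ lam * r ^ γ < ‖f x‖} ∩ Metric.closedBall a r) /
          (ballVol m * ENNReal.ofReal (r ^ m))) (𝓝[>] (0 : ℝ))
        < ENNReal.ofReal M) :
    Filter.limsup (fun r : ℝ =>
        volume ({x | x ∈ A ∧ (2 : ℝ) ^ γ * lam * ‖x - a‖ ^ γ < ‖f x‖} ∩
            Metric.closedBall a r) /
          (ballVol m * ENNReal.ofReal (r ^ m))) (𝓝[>] (0 : ℝ))
        < ENNReal.ofReal (M * (1 - (2 : ℝ) ^ (-(m : ℝ)))⁻¹) :=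
  stmt0_general hm A a f γ hγ M lam hlam h
end

section
/- Let $A = \bigcup_{i=0}^{\infty} \{t \in \mathbb{R} : 2^{-2i-1} < |t| < 2^{-2i}\}$ and let $\phi = \mathcal{L}^1 \llcorner A$. Then $\mathrm{Tan}^1_*(\phi, 0) = \{0\}$, while the set $T = \{v \in \mathbb{R} : \Theta^1_*(\phi \llcorner \mathbf{E}(0,v,\epsilon), 0) > 0 \text{ for every } \epsilon > 0\}$ equals all of $\mathbb{R}$. -/
open MeasureTheory Metric Filter Set
open scoped ENNReal Topology

variable {X : Type*} [NormedAddCommGroup X] [NormedSpace ℝ X] [MeasurableSpace X]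

/-- The cone `𝐄(a,v,ε) = {x : |r(x-a) - v| < ε for some r > 0}`. -/
def ECone (a v : X) (ε : ℝ) : Set X :=
  {x | ∃ r : ℝ, 0 < r ∧ ‖r • (x - a) - v‖ < ε}

/-- Upper `m`-dimensional density `Θ^{*m}(φ, a)`. -/
noncomputable def upperDensity (m : ℕ) (φ : Measure X) (a : X) : ℝ≥0∞ :=
  Filter.limsup (fun r : ℝ =>
    φ (Metric.closedBall a r) / (ballVol m * ENNReal.ofReal (r ^ m))) (𝓝[>] (0 : ℝ))

/-- Lower `m`-dimensional density `Θ^m_*(φ, a)`. -/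
noncomputable def lowerDensity (m : ℕ) (φ : Measure X) (a : X) : ℝ≥0∞ :=
  Filter.liminf (fun r : ℝ =>
    φ (Metric.closedBall a r) / (ballVol m * ENNReal.ofReal (r ^ m))) (𝓝[>] (0 : ℝ))

/-- The `m`-dimensional approximate upper tangent cone `Tan^{*m}(φ, a)`. -/
def TanUpper (m : ℕ) (φ : Measure X) (a : X) : Set X :=
  {v | ∀ ε : ℝ, 0 < ε → 0 < upperDensity m (φ.restrict (ECone a v ε)) a}

/-- The `m`-dimensional approximate lower tangent cone `Tan^m_*(φ, a)`. -/
def TanLower (m : ℕ) (φ : Measure X) (a : X) : Set X :=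
  {v | ∀ ε : ℝ, 0 < ε → ∃ η : ℝ, 0 < η ∧ ∀ r : ℝ, 0 < r → r ≤ η →
    ENNReal.ofReal (η * r ^ m) ≤ φ (Metric.ball (a + r • v) (ε * r))}

/-! The set `A` meets every interval `(0, s)` with `s ≤ 1` in measure at least `s / 8`, and
symmetrically on the negative side. Every cone `𝐄(0, v, ε)` contains one of the two half-lines,
so all lower densities `Θ^1_*(φ ⌞ 𝐄(0, v, ε), 0)` are at least `1 / 16`. On the other hand `A`
omits the gaps `4⁻ⁿ / 4 ≤ |t| ≤ 4⁻ⁿ / 2`, so for `v ≠ 0` there are arbitrarily small `r` for which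
`𝐔(r v, |v| r / 3)` lies in such a gap and carries no `φ`-mass; thus `v ∉ Tan^1_*(φ, 0)`. -/

theorem zero_mem_TanLower_of_le_measure_ball {m : ℕ} {φ : Measure X} {a : X} {c δ : ℝ}
    (hc : 0 < c) (hδ : 0 < δ)
    (h : ∀ s, 0 < s → s ≤ δ → ENNReal.ofReal (c * s ^ m) ≤ φ (ball a s)) :
    (0 : X) ∈ TanLower m φ a := by
  intro ε hε
  refine ⟨min (c * ε ^ m) (δ / ε), by positivity, fun r hr hrη => ?_⟩
  have hεr : ε * r ≤ δ := by
    calc ε * r ≤ ε * (δ / ε) := by gcongr; exact hrη.trans (min_le_right _ _)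
      _ = δ := by field_simp
  calc ENNReal.ofReal (min (c * ε ^ m) (δ / ε) * r ^ m)
      ≤ ENNReal.ofReal (c * (ε * r) ^ m) := by
        rw [mul_pow, ← mul_assoc]
        gcongr
        exact min_le_left _ _
    _ ≤ φ (ball (a + r • (0 : X)) (ε * r)) := by
        rw [smul_zero, add_zero]
        exact h _ (by positivity) hεr

theorem notMem_TanLower_of_measure_ball_eq_zero {m : ℕ} {φ : Measure X} {a v : X} {ε : ℝ}
    (hε : 0 < ε) (h : ∀ η > 0, ∃ r, 0 < r ∧ r ≤ η ∧ φ (ball (a + r • v) (ε * r)) = 0) :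
    v ∉ TanLower m φ a := by
  intro hv
  obtain ⟨η, hη, hball⟩ := hv ε hε
  obtain ⟨r, hr, hrη, hzero⟩ := h η hη
  have := hball r hr hrη
  rw [hzero, nonpos_iff_eq_zero, ENNReal.ofReal_eq_zero] at this
  exact this.not_gt (by positivity)

theorem lowerDensity_pos_of_le_measure_closedBall {E : Type*} [NormedAddCommGroup E]
    [MeasurableSpace E] {m : ℕ} {ψ : Measure E} {a : E} {c : ℝ}
    (hc : 0 < c) (h : ∀ᶠ r in 𝓝[>] 0, ENNReal.ofReal (c * r ^ m) ≤ ψ (closedBall a r)) :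
    0 < lowerDensity m ψ a := by
  have hvol : ballVol m ≠ ⊤ := measure_closedBall_lt_top.ne
  have hbound : ∀ᶠ r in 𝓝[>] 0, ENNReal.ofReal c / ballVol m ≤
      ψ (closedBall a r) / (ballVol m * ENNReal.ofReal (r ^ m)) := by
    filter_upwards [h, self_mem_nhdsWithin] with r hr hr0
    have hrm : ENNReal.ofReal (r ^ m) ≠ 0 := by
      rw [Ne, ENNReal.ofReal_eq_zero, not_le]; exact pow_pos hr0 m
    calc ENNReal.ofReal c / ballVol m
        = ENNReal.ofReal c * ENNReal.ofReal (r ^ m) / (ballVol m * ENNReal.ofReal (r ^ m)) :=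
          (ENNReal.mul_div_mul_right _ _ hrm ENNReal.ofReal_ne_top).symm
      _ ≤ ψ (closedBall a r) / (ballVol m * ENNReal.ofReal (r ^ m)) := by
          rw [← ENNReal.ofReal_mul hc.le]; gcongr
  exact (ENNReal.div_pos_iff.2 ⟨by simpa using hc, hvol⟩).trans_le
    (le_liminf_of_le (by isBoundedDefault) hbound)

def dyadicAnnuli : Set ℝ :=
  ⋃ i : ℕ, {t : ℝ | (2 : ℝ) ^ (-(2 * (i : ℤ)) - 1) < |t| ∧ |t| < (2 : ℝ) ^ (-(2 * (i : ℤ)))}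

theorem mem_dyadicAnnuli {t : ℝ} :
    t ∈ dyadicAnnuli ↔ ∃ i : ℕ, 4⁻¹ ^ i / 2 < |t| ∧ |t| < (4⁻¹ : ℝ) ^ i := by
  have h2i (i : ℕ) : (2 : ℝ) ^ (-(2 * (i : ℤ))) = 4⁻¹ ^ i := by
    rw [zpow_neg, zpow_mul, inv_pow]; norm_num
  have h2i' (i : ℕ) : (2 : ℝ) ^ (-(2 * (i : ℤ)) - 1) = 4⁻¹ ^ i / 2 := by
    rw [zpow_sub₀ two_ne_zero, h2i, zpow_one]
  simp only [dyadicAnnuli, mem_iUnion, mem_ofPred_eq, h2i, h2i']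

theorem neg_dyadicAnnuli : -dyadicAnnuli = dyadicAnnuli := by
  ext t
  simp only [Set.mem_neg, mem_dyadicAnnuli, abs_neg]

theorem Ioo_subset_dyadicAnnuli (i : ℕ) : Ioo (4⁻¹ ^ i / 2) ((4⁻¹ : ℝ) ^ i) ⊆ dyadicAnnuli :=
  fun t ht => mem_dyadicAnnuli.2 ⟨i, ht.1.trans_le (le_abs_self t), (abs_of_pos
    ((by positivity : (0 : ℝ) < 4⁻¹ ^ i / 2).trans ht.1)).symm ▸ ht.2⟩

theorem notMem_dyadicAnnuli_of_mem_gap {n : ℕ} {x : ℝ} (h₁ : (4⁻¹ : ℝ) ^ (n + 1) ≤ |x|)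
    (h₂ : |x| ≤ 4⁻¹ ^ n / 2) : x ∉ dyadicAnnuli := by
  intro hx
  obtain ⟨i, hi₁, hi₂⟩ := mem_dyadicAnnuli.1 hx
  rcases le_or_gt i n with hin | hni
  · have : (4⁻¹ : ℝ) ^ n ≤ 4⁻¹ ^ i := pow_le_pow_of_le_one (by norm_num) (by norm_num) hin
    linarith
  · have : (4⁻¹ : ℝ) ^ i ≤ 4⁻¹ ^ (n + 1) := pow_le_pow_of_le_one (by norm_num) (by norm_num) hni
    linarith

theorem ofReal_div_eight_le_volume_dyadicAnnuli_inter_Ioo {s : ℝ} (hs₀ : 0 < s) (hs₁ : s ≤ 1) :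
    ENNReal.ofReal (s / 8) ≤ volume (dyadicAnnuli ∩ Ioo 0 s) := by
  obtain ⟨n, hn₁, hn₂⟩ := exists_nat_pow_near_of_lt_one hs₀ hs₁ (by norm_num : (0 : ℝ) < 4⁻¹)
    (by norm_num)
  have hsub : Ioo (4⁻¹ ^ (n + 1) / 2) ((4⁻¹ : ℝ) ^ (n + 1)) ⊆ dyadicAnnuli ∩ Ioo 0 s :=
    fun t ht => ⟨Ioo_subset_dyadicAnnuli _ ht, (by positivity : (0 : ℝ) < _).trans ht.1,
      ht.2.trans hn₁⟩
  calc ENNReal.ofReal (s / 8) ≤ ENNReal.ofReal (4⁻¹ ^ (n + 1) - 4⁻¹ ^ (n + 1) / 2) := by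
        gcongr; rw [pow_succ]; linarith
    _ = volume (Ioo (4⁻¹ ^ (n + 1) / 2) ((4⁻¹ : ℝ) ^ (n + 1))) := (Real.volume_Ioo ..).symm
    _ ≤ volume (dyadicAnnuli ∩ Ioo 0 s) := measure_mono hsub

theorem ofReal_div_eight_le_volume_dyadicAnnuli_inter_Ioo_neg {s : ℝ} (hs₀ : 0 < s)
    (hs₁ : s ≤ 1) : ENNReal.ofReal (s / 8) ≤ volume (dyadicAnnuli ∩ Ioo (-s) 0) := by
  rw [← neg_zero, ← neg_Ioo, ← neg_dyadicAnnuli, ← inter_neg, Measure.measure_neg]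
  exact ofReal_div_eight_le_volume_dyadicAnnuli_inter_Ioo hs₀ hs₁

theorem ofReal_div_eight_le_volume_ball_inter_dyadicAnnuli {s : ℝ} (hs₀ : 0 < s)
    (hs₁ : s ≤ 1) : ENNReal.ofReal (s / 8) ≤ volume (ball 0 s ∩ dyadicAnnuli) := by
  refine (ofReal_div_eight_le_volume_dyadicAnnuli_inter_Ioo hs₀ hs₁).trans (measure_mono ?_)
  rw [inter_comm, Real.ball_eq_Ioo, zero_sub, zero_add]
  exact inter_subset_inter_left _ (Ioo_subset_Ioo_left (by linarith))

theorem disjoint_ball_dyadicAnnuli {v η : ℝ} (hv : v ≠ 0) (hη : 0 < η) :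
    ∃ r, 0 < r ∧ r ≤ η ∧ Disjoint (ball (r * v) (|v| / 3 * r)) dyadicAnnuli := by
  have hv' : 0 < |v| := abs_pos.2 hv
  obtain ⟨n, hn⟩ := exists_pow_lt_of_lt_one (by positivity : 0 < 8 * η * |v| / 3)
    (by norm_num : (4⁻¹ : ℝ) < 1)
  set q : ℝ := 4⁻¹ ^ n with hq
  -- the ball is the annulus `q/4 < |x| < q/2`, which lies in a gap of `dyadicAnnuli`
  refine ⟨3 * q / (8 * |v|), by positivity, ?_, ?_⟩
  · rw [div_le_iff₀ (by positivity)]; linarith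
  · rw [Set.disjoint_left]
    intro x hx
    have hcenter : |3 * q / (8 * |v|) * v| = 3 * q / 8 := by
      rw [abs_mul, abs_of_pos (by positivity : 0 < 3 * q / (8 * |v|))]; field_simp
    have hrad : |v| / 3 * (3 * q / (8 * |v|)) = q / 8 := by field_simp
    rw [mem_ball, Real.dist_eq, hrad] at hx
    have h₁ := abs_sub_abs_le_abs_sub (3 * q / (8 * |v|) * v) x
    have h₂ := abs_sub_abs_le_abs_sub x (3 * q / (8 * |v|) * v)
    rw [abs_sub_comm] at h₁
    refine notMem_dyadicAnnuli_of_mem_gap (n := n) ?_ ?_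
    · rw [pow_succ, ← hq]; linarith
    · rw [← hq]; linarith

theorem Ioi_subset_ECone_zero {v ε : ℝ} (hv : 0 ≤ v) (hε : 0 < ε) :
    Ioi 0 ⊆ ECone (0 : ℝ) v ε := by
  intro x (hx : 0 < x)
  refine ⟨(v + ε / 2) / x, by positivity, ?_⟩
  rw [sub_zero, smul_eq_mul, div_mul_cancel₀ _ hx.ne', add_sub_cancel_left, Real.norm_eq_abs,
    abs_of_pos (half_pos hε)]
  exact half_lt_self hε

theorem Iio_subset_ECone_zero {v ε : ℝ} (hv : v ≤ 0) (hε : 0 < ε) :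
    Iio 0 ⊆ ECone (0 : ℝ) v ε := by
  intro x (hx : x < 0)
  refine ⟨(v - ε / 2) / x, div_pos_of_neg_of_neg (by linarith) hx, ?_⟩
  rw [sub_zero, smul_eq_mul, div_mul_cancel₀ _ hx.ne, sub_sub_cancel_left, Real.norm_eq_abs,
    abs_neg, abs_of_pos (half_pos hε)]
  exact half_lt_self hε

theorem ofReal_div_eight_le_volume_ECone_inter_dyadicAnnuli {v ε r : ℝ} (hε : 0 < ε)
    (hr₀ : 0 < r) (hr₁ : r ≤ 1) :
    ENNReal.ofReal (r / 8) ≤ volume (closedBall 0 r ∩ ECone 0 v ε ∩ dyadicAnnuli) := by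
  rw [inter_comm _ dyadicAnnuli, Real.closedBall_eq_Icc, zero_sub, zero_add]
  rcases le_total 0 v with hv | hv
  · refine (ofReal_div_eight_le_volume_dyadicAnnuli_inter_Ioo hr₀ hr₁).trans (measure_mono ?_)
    refine inter_subset_inter_right _ (subset_inter ?_ (Ioo_subset_Ioi_self.trans ?_))
    · exact Ioo_subset_Icc_self.trans (Icc_subset_Icc_left (by linarith))
    · exact Ioi_subset_ECone_zero hv hε
  · refine (ofReal_div_eight_le_volume_dyadicAnnuli_inter_Ioo_neg hr₀ hr₁).trans
      (measure_mono ?_)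
    refine inter_subset_inter_right _ (subset_inter ?_ (Ioo_subset_Iio_self.trans ?_))
    · exact Ioo_subset_Icc_self.trans (Icc_subset_Icc_right (by linarith))
    · exact Iio_subset_ECone_zero hv hε

theorem stmt5
    (A : Set ℝ)
    (hA : A = ⋃ i : ℕ, {t : ℝ | (2 : ℝ) ^ (-(2 * (i : ℤ)) - 1) < |t| ∧
      |t| < (2 : ℝ) ^ (-(2 * (i : ℤ)))})
    (φ : Measure ℝ) (hφ : φ = volume.restrict A) :
    TanLower 1 φ (0 : ℝ) = {0} ∧
    {v : ℝ | ∀ ε : ℝ, 0 < ε →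
        0 < lowerDensity 1 (φ.restrict (ECone (0 : ℝ) v ε)) (0 : ℝ)} = Set.univ := by
  obtain rfl : A = dyadicAnnuli := hA
  subst hφ
  refine ⟨Subset.antisymm (fun v hv => ?_) ?_, eq_univ_of_forall fun v ε hε => ?_⟩
  · by_contra hv₀
    refine notMem_TanLower_of_measure_ball_eq_zero (div_pos (abs_pos.2 hv₀) three_pos)
      (fun η hη => ?_) hv
    obtain ⟨r, hr, hrη, hdisj⟩ := disjoint_ball_dyadicAnnuli hv₀ hη
    refine ⟨r, hr, hrη, ?_⟩
    rw [Measure.restrict_apply measurableSet_ball, zero_add, smul_eq_mul, hdisj.inter_eq,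
      measure_empty]
  · rintro _ rfl
    refine zero_mem_TanLower_of_le_measure_ball (by norm_num : (0 : ℝ) < 1 / 8) one_pos
      fun s hs₀ hs₁ => ?_
    calc ENNReal.ofReal (1 / 8 * s ^ 1) = ENNReal.ofReal (s / 8) := by ring_nf
      _ ≤ volume (ball 0 s ∩ dyadicAnnuli) :=
          ofReal_div_eight_le_volume_ball_inter_dyadicAnnuli hs₀ hs₁
      _ ≤ _ := Measure.le_restrict_apply _ _
  · refine lowerDensity_pos_of_le_measure_closedBall (by norm_num : (0 : ℝ) < 1 / 8) ?_
    filter_upwards [Ioc_mem_nhdsGT one_pos] with r ⟨hr₀, hr₁⟩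
    calc ENNReal.ofReal (1 / 8 * r ^ 1) = ENNReal.ofReal (r / 8) := by ring_nf
      _ ≤ volume (closedBall 0 r ∩ ECone 0 v ε ∩ dyadicAnnuli) :=
          ofReal_div_eight_le_volume_ECone_inter_dyadicAnnuli hε hr₀ hr₁
      _ ≤ (volume.restrict dyadicAnnuli).restrict (ECone 0 v ε) (closedBall 0 r) :=
          (Measure.le_restrict_apply _ _).trans (Measure.le_restrict_apply _ _)
end

section
/- Suppose $1 \leq m \leq n$ are integers, $\gamma > 0$, $A, B \subseteq \mathbb{R}^n$ with $0 \in \mathrm{Clos}\,B$, and $f : \mathbb{R}^n \to \mathbb{R}^n$ is a bijection with $f(0) = 0$ such that both $f$ and $f^{-1}$ are locally Lipschitz. Then for every $\epsilon > 0$, $\lim_{r\to 0} \frac{\mathcal{H}^m(A \cap \mathbf{B}(0,r) \cap \{z : \delta_B(z) > \epsilon r^\gamma\})}{\alpha(m) r^m} = 0$ holds if and only if for every $\epsilon > 0$, $\lim_{r\to 0} \frac{\mathcal{H}^m(f[A] \cap \mathbf{B}(0,r) \cap \{z : \delta_{f[B]}(z) > \epsilon r^\gamma\})}{\alpha(m)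 r^m} = 0$. -/
open MeasureTheory Metric Filter Set
open scoped ENNReal Topology

/-!
Near the base point, `f` and its inverse are both `L`-Lipschitz. If `f a` lies in `f[A] ∩ B(0, r)`
at distance more than `ε r^γ` from `f[B]`, then `a` lies in `B(0, L r)` at distance more than
`δ (L r)^γ` from `B`, where `δ = ε / (2 L^(1 + γ))`: a point of `B` within `2 δ (L r)^γ` of `a`
would be mapped within `ε r^γ` of `f a`. So the far part of `f[A]` at scale `r` is the image of a
part of the far part of `A` at scale `L r`; this costs a factor `L^m` in `𝓗^m` and another `L^m`
in the normalisation `α(m) r^m`. Exchanging the roles of `f` and its inverse gives the converse.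
-/

open scoped NNReal

variable {X Y : Type*} [MetricSpace X] [MetricSpace Y]

def farPart (A B : Set X) (x : X) (r τ : ℝ) : Set X :=
  A ∩ closedBall x r ∩ {z | τ < infDist z B}

def FarDensityVanishes [MeasurableSpace X] [BorelSpace X] (m : ℕ) (γ : ℝ) (A B : Set X) (x : X) :
    Prop :=
  ∀ ε : ℝ, 0 < ε → Tendsto (fun r : ℝ =>
    μH[(m : ℝ)] (farPart A B x r (ε * r ^ γ)) / (ballVol m * ENNReal.ofReal (r ^ m)))
    (𝓝[>] 0) (𝓝 0)

lemma LipschitzOnWith.infDist_image_le {f : X → Y} {L : ℝ≥0} {U B : Set X} {a : X} {t : ℝ}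
    (hf : LipschitzOnWith L f U) (ha : a ∈ U) (hB : ∀ b ∈ B, dist a b < t → b ∈ U)
    (hat : infDist a B < t) : infDist (f a) (f '' B) ≤ L * t := by
  rcases B.eq_empty_or_nonempty with rfl | hne
  · rw [infDist_empty] at hat
    simpa using mul_nonneg L.coe_nonneg hat.le
  obtain ⟨b, hb, hab⟩ := (infDist_lt_iff hne).1 hat
  calc infDist (f a) (f '' B) ≤ dist (f a) (f b) := infDist_le_dist_of_mem (mem_image_of_mem f hb)
    _ ≤ L * dist a b := hf.dist_le_mul a ha b (hB b hb hab)
    _ ≤ L * t := by gcongr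

lemma LocallyLipschitz.exists_lipschitzOnWith_ball {f : X → Y} (hf : LocallyLipschitz f) (x : X) :
    ∃ K : ℝ≥0, ∃ R > 0, LipschitzOnWith K f (ball x R) := by
  obtain ⟨K, t, ht, hK⟩ := hf x
  obtain ⟨R, hR, hRt⟩ := Metric.mem_nhds_iff.1 ht
  exact ⟨K, R, hR, hK.mono hRt⟩

section

variable {f : X → Y} {g : Y → X} {L : ℝ≥0} {A B : Set X} {x : X} {R r s η t τ : ℝ}

lemma image_farPart_subset
    (hf : LipschitzOnWith L f (ball x R)) (hg : LipschitzOnWith L g (ball (f x) R))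
    (hgf : ∀ a ∈ A, g (f a) = a) (hgx : g (f x) = x)
    (hr : r < R) (hs : L * r ≤ s) (hst : s + t ≤ R) (hη : η < t) (hτ : L * t ≤ τ) :
    farPart (f '' A) (f '' B) (f x) r τ ⊆ f '' farPart A B x s η := by
  rintro _ ⟨⟨⟨a, ha, rfl⟩, hfa⟩, hfar⟩
  have hfa : dist (f a) (f x) ≤ r := hfa
  have hfaR : dist (f a) (f x) < R := hfa.trans_lt hr
  have hax : dist a x ≤ s := calc
    dist a x = dist (g (f a)) (g (f x)) := by rw [hgf a ha, hgx]
    _ ≤ L * dist (f a) (f x) :=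
      hg.dist_le_mul _ hfaR _ (mem_ball_self (dist_nonneg.trans_lt hfaR))
    _ ≤ L * r := by gcongr
    _ ≤ s := hs
  refine ⟨a, ⟨⟨ha, mem_closedBall.2 hax⟩, show η < infDist a B from ?_⟩, rfl⟩
  by_contra! hnear
  have hat : infDist a B < t := hnear.trans_lt hη
  have hball : ∀ b, dist a b < t → b ∈ ball x R := fun b hab => mem_ball.2 <| calc
    dist b x ≤ dist a b + dist a x := dist_triangle_left b x a
    _ < t + s := add_lt_add_of_lt_of_le hab hax
    _ ≤ R := by linarith
  have ha_ball : a ∈ ball x R := hball a (by simpa using infDist_nonneg.trans_lt hat)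
  exact hfar.not_ge ((hf.infDist_image_le ha_ball (fun b _ => hball b) hat).trans hτ)

variable [MeasurableSpace X] [BorelSpace X] [MeasurableSpace Y] [BorelSpace Y] {m : ℕ} {γ : ℝ}

lemma hausdorffMeasure_farPart_image_le
    (hf : LipschitzOnWith L f (ball x R)) (hg : LipschitzOnWith L g (ball (f x) R))
    (hgf : ∀ a ∈ A, g (f a) = a) (hgx : g (f x) = x)
    (hr : r < R) (hs : L * r ≤ s) (hst : s + t ≤ R) (hη₀ : 0 ≤ η) (hη : η < t) (hτ : L * t ≤ τ) :
    μH[(m : ℝ)] (farPart (f '' A) (f '' B) (f x) r τ) ≤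
      (L : ℝ≥0∞) ^ m * μH[(m : ℝ)] (farPart A B x s η) := by
  have hball : farPart A B x s η ⊆ ball x R := fun a ha =>
    mem_ball.2 ((mem_closedBall.1 ha.1.2).trans_lt (by linarith))
  calc μH[(m : ℝ)] (farPart (f '' A) (f '' B) (f x) r τ)
      ≤ μH[(m : ℝ)] (f '' farPart A B x s η) :=
        measure_mono (image_farPart_subset hf hg hgf hgx hr hs hst hη hτ)
    _ ≤ (L : ℝ≥0∞) ^ m * μH[(m : ℝ)] (farPart A B x s η) := by
        simpa only [ENNReal.rpow_natCast] using
          (hf.mono hball).hausdorffMeasure_image_le (Nat.cast_nonneg m)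

theorem FarDensityVanishes.image_of_lipschitzOnWith (hγ : 0 < γ) (hL : 0 < L) (hR : 0 < R)
    (hf : LipschitzOnWith L f (ball x R)) (hg : LipschitzOnWith L g (ball (f x) R))
    (hgf : ∀ a ∈ A, g (f a) = a) (hgx : g (f x) = x) (h : FarDensityVanishes m γ A B x) :
    FarDensityVanishes m γ (f '' A) (f '' B) (f x) := by
  intro ε hε
  have hL' : (0 : ℝ) < L := hL
  set δ : ℝ := ε / (2 * (L : ℝ) ^ (1 + γ))
  have hδ : 0 < δ := by positivity
  have hthreshold (r : ℝ) (hr : 0 ≤ r) : L * (2 * (δ * (L * r) ^ γ)) = ε * r ^ γ := by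
    simp only [δ, Real.mul_rpow hL'.le hr, Real.rpow_add hL', Real.rpow_one]
    field_simp
  have hscale : Tendsto (fun r : ℝ => (L : ℝ) * r) (𝓝[>] 0) (𝓝[>] 0) := by
    simpa only [comap_mulLeft_nhdsGT_zero hL'] using
      tendsto_comap (f := fun r : ℝ => (L : ℝ) * r) (x := 𝓝[>] 0)
  have hsmall : ∀ᶠ r in 𝓝[>] (0 : ℝ), r < R ∧ L * r + 2 * (δ * (L * r) ^ γ) < R := by
    have hcont : ContinuousAt (fun r : ℝ => L * r + 2 * (δ * (L * r) ^ γ)) 0 := by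
      fun_prop (disch := exact Or.inr hγ.le)
    exact nhdsWithin_le_nhds ((eventually_lt_nhds hR).and
      (hcont.tendsto.eventually_lt_const (by simpa [Real.zero_rpow hγ.ne'] using hR)))
  have hdenom (r : ℝ) (hr : 0 ≤ r) : ballVol m * ENNReal.ofReal (((L : ℝ) * r) ^ m) =
      (L : ℝ≥0∞) ^ m * (ballVol m * ENNReal.ofReal (r ^ m)) := by
    rw [mul_pow, ENNReal.ofReal_mul (by positivity), ENNReal.ofReal_pow L.coe_nonneg,
      ENNReal.ofReal_coe_nnreal]
    ring
  have hbound : ∀ᶠ r in 𝓝[>] (0 : ℝ),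
      μH[(m : ℝ)] (farPart (f '' A) (f '' B) (f x) r (ε * r ^ γ)) /
          (ballVol m * ENNReal.ofReal (r ^ m)) ≤
        ((L : ℝ≥0∞) ^ m * (L : ℝ≥0∞) ^ m) *
          (μH[(m : ℝ)] (farPart A B x (L * r) (δ * (L * r) ^ γ)) /
            (ballVol m * ENNReal.ofReal (((L : ℝ) * r) ^ m))) := by
    filter_upwards [self_mem_nhdsWithin, hsmall] with r (hr : 0 < r) ⟨hrR, hsR⟩
    have hLm : (L : ℝ≥0∞) ^ m ≠ 0 := pow_ne_zero _ (by exact_mod_cast hL.ne')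
    rw [hdenom r hr.le, ← mul_div_assoc, mul_assoc,
      ENNReal.mul_div_mul_left _ _ hLm (by finiteness)]
    gcongr
    exact hausdorffMeasure_farPart_image_le hf hg hgf hgx hrR le_rfl hsR.le
      (by positivity) (by linarith [show 0 < δ * (L * r) ^ γ by positivity])
      (hthreshold r hr.le).le
  have hlim : Tendsto (fun r : ℝ => ((L : ℝ≥0∞) ^ m * (L : ℝ≥0∞) ^ m) *
      (μH[(m : ℝ)] (farPart A B x (L * r) (δ * (L * r) ^ γ)) /
        (ballVol m * ENNReal.ofReal (((L : ℝ) * r) ^ m)))) (𝓝[>] 0) (𝓝 0) := by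
    simpa using ENNReal.Tendsto.const_mul ((h δ hδ).comp hscale) (Or.inr (by finiteness))
  exact tendsto_of_tendsto_of_tendsto_of_le_of_le' tendsto_const_nhds hlim
    (Eventually.of_forall fun _ => zero_le) hbound

theorem FarDensityVanishes.image (hγ : 0 < γ)
    (hf : LocallyLipschitz f) (hg : LocallyLipschitz g) (hgf : ∀ a ∈ A, g (f a) = a)
    (hgx : g (f x) = x) (h : FarDensityVanishes m γ A B x) :
    FarDensityVanishes m γ (f '' A) (f '' B) (f x) := by
  obtain ⟨K₁, R₁, hR₁, hf₁⟩ := hf.exists_lipschitzOnWith_ball x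
  obtain ⟨K₂, R₂, hR₂, hg₂⟩ := hg.exists_lipschitzOnWith_ball (f x)
  exact h.image_of_lipschitzOnWith hγ (L := max K₁ K₂ + 1) (by positivity) (lt_min hR₁ hR₂)
    ((hf₁.mono (ball_subset_ball (min_le_left _ _))).weaken (le_add_right (le_max_left _ _)))
    ((hg₂.mono (ball_subset_ball (min_le_right _ _))).weaken (le_add_right (le_max_right _ _)))
    hgf hgx

end

theorem stmt9_general {m n : ℕ} (γ : ℝ) (hγ : 0 < γ)
    (A B : Set (EuclideanSpace ℝ (Fin n)))
    (f g : EuclideanSpace ℝ (Fin n) → EuclideanSpace ℝ (Fin n))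
    (hfg : Function.LeftInverse g f)
    (hf : LocallyLipschitz f) (hg : LocallyLipschitz g)
    (hf0 : f 0 = 0) :
    (∀ ε : ℝ, 0 < ε → Filter.Tendsto (fun r : ℝ =>
        μH[(m : ℝ)] (A ∩ Metric.closedBall 0 r ∩ {z | ε * r ^ γ < Metric.infDist z B}) /
          (ballVol m * ENNReal.ofReal (r ^ m))) (𝓝[>] (0 : ℝ)) (𝓝 0)) ↔
    (∀ ε : ℝ, 0 < ε → Filter.Tendsto (fun r : ℝ =>
        μH[(m : ℝ)] ((f '' A) ∩ Metric.closedBall 0 r ∩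
            {z | ε * r ^ γ < Metric.infDist z (f '' B)}) /
          (ballVol m * ENNReal.ofReal (r ^ m))) (𝓝[>] (0 : ℝ)) (𝓝 0)) := by
  change FarDensityVanishes m γ A B 0 ↔ FarDensityVanishes m γ (f '' A) (f '' B) 0
  have hg0 : g 0 = 0 := by simpa [hf0] using hfg 0
  constructor
  · intro h
    simpa only [hf0] using h.image hγ hf hg (fun a _ => hfg a) (hfg 0)
  · intro h
    have h' := h.image hγ hg hf (by rintro _ ⟨a, -, rfl⟩; rw [hfg a]) (by rw [hg0, hf0])
    rwa [hfg.image_image, hfg.image_image, hg0] at h'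

theorem stmt9 {m n : ℕ} (hm : 1 ≤ m) (hmn : m ≤ n) (γ : ℝ) (hγ : 0 < γ)
    (A B : Set (EuclideanSpace ℝ (Fin n))) (hB : (0 : EuclideanSpace ℝ (Fin n)) ∈ closure B)
    (f g : EuclideanSpace ℝ (Fin n) → EuclideanSpace ℝ (Fin n))
    (hfg : Function.LeftInverse g f) (hgf : Function.RightInverse g f)
    (hf : LocallyLipschitz f) (hg : LocallyLipschitz g)
    (hf0 : f 0 = 0) :
    (∀ ε : ℝ, 0 < ε → Filter.Tendsto (fun r : ℝ =>
        μH[(m : ℝ)] (A ∩ Metric.closedBall 0 r ∩ {z | ε * r ^ γ < Metric.infDist z B}) /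
          (ballVol m * ENNReal.ofReal (r ^ m))) (𝓝[>] (0 : ℝ)) (𝓝 0)) ↔
    (∀ ε : ℝ, 0 < ε → Filter.Tendsto (fun r : ℝ =>
        μH[(m : ℝ)] ((f '' A) ∩ Metric.closedBall 0 r ∩
            {z | ε * r ^ γ < Metric.infDist z (f '' B)}) /
          (ballVol m * ENNReal.ofReal (r ^ m))) (𝓝[>] (0 : ℝ)) (𝓝 0)) :=
  stmt9_general γ hγ A B f g hfg hf hg hf0
end

section
/- Suppose $1 \leq m \leq n$ are integers, $A \subseteq \mathbb{R}^n$, $a \in \mathbb{R}^n$, and $T$ is an $m$-dimensional subspace of $\mathbb{R}^n$ with $T \subseteq \mathrm{Tan}^m_*(\mathcal{H}^m \llcorner A, a)$. Then for every $\epsilon > 0$ there exist $\rho > 0$ and $\eta > 0$ such that $\mathcal{H}^m(\mathbf{C}(T, z, \epsilon r, \epsilon r) \cap \{x - a : x \in A\}) \geq \eta r^m$ for every $z \in T \cap \mathbf{B}(0,r)$ and every $0 < r \leq \rho$. -/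
open MeasureTheory Metric Filter Set
open scoped ENNReal Topology

variable {X : Type*} [NormedAddCommGroup X] [NormedSpace ℝ X] [MeasurableSpace X]

/-- Orthogonal projection onto a subspace, as a map into the ambient space. -/
noncomputable def projS {n : ℕ} (T : Submodule ℝ (EuclideanSpace ℝ (Fin n)))
    (x : EuclideanSpace ℝ (Fin n)) : EuclideanSpace ℝ (Fin n) :=
  (Submodule.orthogonalProjection T x : EuclideanSpace ℝ (Fin n))

/-!
The lower bounds defining `Tan^m_*` are uniform on the compact set `T ∩ B(0, 1)` by a
finite-net argument. For `z ∈ T` with `‖z‖ ≤ r`, applying this to `v = z / r` bounds the measure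
of `U(a + z, εr) ∩ A`, which after translating by `-a` is a ball around `z` inside the cylinder
`C(T, z, εr, εr)`.
-/

lemma TanLower.eventually_ofReal_le_measure_ball {m : ℕ} {φ : Measure X} {a v : X}
    (hv : v ∈ TanLower m φ a) {ε : ℝ} (hε : 0 < ε) :
    ∀ᶠ η in 𝓝[>] (0 : ℝ), ∀ r : ℝ, 0 < r → r ≤ η →
      ENNReal.ofReal (η * r ^ m) ≤ φ (ball (a + r • v) (ε * r)) := by
  obtain ⟨η₀, hη₀, hbound⟩ := hv ε hε
  filter_upwards [Ioc_mem_nhdsGT hη₀] with η ⟨_, hη⟩ r hr hrη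
  exact (ENNReal.ofReal_le_ofReal (by gcongr)).trans (hbound r hr (hrη.trans hη))

/- The bound for a single `v` survives shrinking `η`, so it holds eventually in `𝓝[>] 0`, and
the bounds at the finitely many points of an `ε/2`-net of `K` hold at once. -/
theorem TanLower.exists_pos_forall_ofReal_le_measure_ball {m : ℕ} {φ : Measure X} {a : X}
    {K : Set X} (hK : IsCompact K) (hKT : K ⊆ TanLower m φ a) {ε : ℝ} (hε : 0 < ε) :
    ∃ η > 0, ∀ v ∈ K, ∀ r : ℝ, 0 < r → r ≤ η →
      ENNReal.ofReal (η * r ^ m) ≤ φ (ball (a + r • v) (ε * r)) := by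
  obtain ⟨t, htK, htfin, hcover⟩ := hK.elim_finite_subcover_image
    (c := fun u => ball u (ε / 2)) (fun _ _ => isOpen_ball)
    (fun v hv => mem_biUnion hv (mem_ball_self (half_pos hε)))
  obtain ⟨η, hη, hηt⟩ := (eventually_mem_nhdsWithin.and ((eventually_all_finite htfin).2
    fun u hu => eventually_ofReal_le_measure_ball (hKT (htK hu)) (half_pos hε))).exists
  refine ⟨η, hη, fun v hv r hr hrη => ?_⟩
  obtain ⟨u, hut, hvu⟩ := mem_iUnion₂.1 (hcover hv)
  refine (hηt u hut r hr hrη).trans (measure_mono (ball_subset_ball' ?_))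
  have hdist : dist (a + r • u) (a + r • v) = r * dist u v := by
    rw [dist_add_left, dist_smul₀, Real.norm_of_nonneg hr.le]
  rw [hdist, dist_comm]
  nlinarith [mem_ball.1 hvu]

theorem hausdorffMeasure_inter_image_sub_const {E : Type*} [NormedAddCommGroup E]
    [MeasurableSpace E] [BorelSpace E] (d : ℝ) (S A : Set E) (a : E) :
    μH[d] (S ∩ (fun x => x - a) '' A) = μH[d] ((fun x => x - a) ⁻¹' S ∩ A) := by
  rw [← image_preimage_inter]
  exact (IsometryEquiv.subRight a).isometry.hausdorffMeasure_image
    (Or.inr (IsometryEquiv.subRight a).surjective) _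

lemma norm_projS_le {n : ℕ} (T : Submodule ℝ (EuclideanSpace ℝ (Fin n)))
    (x : EuclideanSpace ℝ (Fin n)) : ‖projS T x‖ ≤ ‖x‖ :=
  T.norm_orthogonalProjectionOnto_apply_le x

lemma ball_subset_cylinder {n : ℕ} (T : Submodule ℝ (EuclideanSpace ℝ (Fin n)))
    (z : EuclideanSpace ℝ (Fin n)) (s : ℝ) :
    ball z s ⊆ {x | ‖projS T (x - z)‖ < s ∧ ‖projS Tᗮ (x - z)‖ < s} := fun _ hx =>
  ⟨(norm_projS_le T _).trans_lt (mem_ball_iff_norm.1 hx),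
    (norm_projS_le Tᗮ _).trans_lt (mem_ball_iff_norm.1 hx)⟩

theorem stmt11_general {m n : ℕ}
    (A : Set (EuclideanSpace ℝ (Fin n))) (a : EuclideanSpace ℝ (Fin n))
    (T : Submodule ℝ (EuclideanSpace ℝ (Fin n)))
    (hTan : (T : Set (EuclideanSpace ℝ (Fin n))) ⊆ TanLower m (μH[(m : ℝ)].restrict A) a) :
    ∀ ε : ℝ, 0 < ε → ∃ ρ : ℝ, 0 < ρ ∧ ∃ η : ℝ, 0 < η ∧
      ∀ r : ℝ, 0 < r → r ≤ ρ → ∀ z ∈ (T : Set (EuclideanSpace ℝ (Fin n))), ‖z‖ ≤ r →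
        ENNReal.ofReal (η * r ^ m) ≤
          μH[(m : ℝ)] ({x | ‖projS T (x - z)‖ < ε * r ∧ ‖projS Tᗮ (x - z)‖ < ε * r} ∩
            ((fun x => x - a) '' A)) := by
  intro ε hε
  have hK : IsCompact ((T : Set (EuclideanSpace ℝ (Fin n))) ∩ closedBall 0 1) :=
    (isCompact_closedBall 0 1).inter_left T.closed_of_finiteDimensional
  obtain ⟨η, hη, hbound⟩ :=
    TanLower.exists_pos_forall_ofReal_le_measure_ball hK (inter_subset_left.trans hTan) hε
  refine ⟨η, hη, η, hη, fun r hr hrη z hzT hzr => ?_⟩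
  have hv : r⁻¹ • z ∈ (T : Set (EuclideanSpace ℝ (Fin n))) ∩ closedBall 0 1 := by
    refine ⟨T.smul_mem _ hzT, ?_⟩
    rw [mem_closedBall_zero_iff, norm_smul, norm_inv, Real.norm_of_nonneg hr.le]
    exact inv_mul_le_one_of_le₀ hzr hr.le
  calc ENNReal.ofReal (η * r ^ m)
      ≤ (μH[(m : ℝ)].restrict A) (ball (a + z) (ε * r)) := by
        simpa only [smul_inv_smul₀ hr.ne'] using hbound _ hv r hr hrη
    _ = μH[(m : ℝ)] (ball z (ε * r) ∩ (fun x => x - a) '' A) := by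
        have hpre : (fun x => x - a) ⁻¹' ball z (ε * r) = ball (a + z) (ε * r) := by
          rw [add_comm]
          exact (IsometryEquiv.subRight a).preimage_ball z _
        rw [hausdorffMeasure_inter_image_sub_const, hpre,
          Measure.restrict_apply measurableSet_ball]
    _ ≤ _ := measure_mono (inter_subset_inter_left _ (ball_subset_cylinder T z _))

theorem stmt11 {m n : ℕ} (hm : 1 ≤ m) (hmn : m ≤ n)
    (A : Set (EuclideanSpace ℝ (Fin n))) (a : EuclideanSpace ℝ (Fin n))
    (T : Submodule ℝ (EuclideanSpace ℝ (Fin n))) (hT : Module.finrank ℝ T = m)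
    (hTan : (T : Set (EuclideanSpace ℝ (Fin n))) ⊆ TanLower m (μH[(m : ℝ)].restrict A) a) :
    ∀ ε : ℝ, 0 < ε → ∃ ρ : ℝ, 0 < ρ ∧ ∃ η : ℝ, 0 < η ∧
      ∀ r : ℝ, 0 < r → r ≤ ρ → ∀ z ∈ (T : Set (EuclideanSpace ℝ (Fin n))), ‖z‖ ≤ r →
        ENNReal.ofReal (η * r ^ m) ≤
          μH[(m : ℝ)] ({x | ‖projS T (x - z)‖ < ε * r ∧ ‖projS Tᗮ (x - z)‖ < ε * r} ∩
            ((fun x => x - a) '' A)) :=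
  stmt11_general A a T hTan
end

section
/- For each $\gamma > 1$ and $\gamma^{-1} < \alpha < (\gamma-1)^{-1}$, let $A_{\alpha,\gamma} \subseteq \mathbb{R}^2$ be the union of the segment $\{(s,0) : -1 \leq s \leq 1\}$ with the vertical segments $\{(\pm n^{-\alpha}, t) : 0 \leq t \leq n^{-\alpha\gamma}\}$ for all integers $n \geq 1$. Then: (a) $\mathcal{H}^1(A_{\alpha,\gamma}) < \infty$; (b) the lower $1$-dimensional density $\Theta^1_*(\mathcal{H}^1 \llcorner A_{\alpha,\gamma}, 0) = \infty$; (c) $\mathrm{Tan}^1_*(\mathcal{H}^1 \llcorner A_{\alpha,\gamma}, 0) = \mathrm{Tan}^{*1}(\mathcal{H}^1 \llcorner A_{\alpha,\gamma}, 0) = \mathbb{R} \times \{0\}$. -/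
open MeasureTheory Metric Filter Set
open scoped ENNReal Topology

variable {X : Type*} [NormedAddCommGroup X] [NormedSpace ℝ X] [MeasurableSpace X]

/-!
The horizontal segment alone makes every horizontal vector a lower tangent vector. The hairs
at `±c n` have heights `c n ^ γ = o(c n)`, so near `0` the set lies in every sector
`|y| ≤ κ |x|`, and such a sector misses the cones around any non-horizontal direction: no other
vector is even an upper tangent vector. `H¹(A)` is finite because `∑ n ^ (-αγ)` converges
(`αγ > 1`). For the density, with `N = ⌊(2 / r) ^ (1 / α)⌋` the ball of radius
`r ≤ 2 N ^ (-α)` contains the `N` hairs `N ≤ n < 2N`, of total length at least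
`N (2N) ^ (-αγ)`, and this is `≫ N ^ (-α)` because `1 + α - αγ > 0`.
-/

open scoped NNReal

local notation "ℝ²" => EuclideanSpace ℝ (Fin 2)

lemma ballVol_ne_zero (m : ℕ) : ballVol m ≠ 0 :=
  (measure_closedBall_pos volume _ one_pos).ne'

lemma ballVol_ne_top (m : ℕ) : ballVol m ≠ ⊤ :=
  measure_closedBall_lt_top.ne

omit [MeasurableSpace X] in
lemma isOpen_ECone (a v : X) (ε : ℝ) : IsOpen (ECone a v ε) := by
  have : ECone a v ε = ⋃ r ∈ Ioi (0 : ℝ), (fun x => r • (x - a)) ⁻¹' ball v ε := by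
    ext x; simp [ECone, dist_eq_norm]
  rw [this]
  exact isOpen_biUnion fun r _ => isOpen_ball.preimage (by fun_prop)

omit [MeasurableSpace X] in
lemma ball_add_smul_subset_closedBall_inter_ECone (a v : X) {ε r : ℝ} (hr : 0 < r) :
    ball (a + r • v) (ε * r) ⊆ closedBall a ((‖v‖ + ε) * r) ∩ ECone a v ε := by
  intro x hx
  rw [mem_ball, dist_eq_norm] at hx
  refine ⟨?_, r⁻¹, inv_pos.2 hr, ?_⟩
  · rw [mem_closedBall, dist_eq_norm]
    calc ‖x - a‖ = ‖(x - (a + r • v)) + r • v‖ := by abel_nf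
      _ ≤ ε * r + r * ‖v‖ := by
        grw [norm_add_le, hx, norm_smul, Real.norm_of_nonneg hr.le]
      _ = (‖v‖ + ε) * r := by ring
  · have : r⁻¹ • (x - a) - v = r⁻¹ • (x - (a + r • v)) := by
      rw [smul_sub, smul_sub, smul_add, smul_smul, inv_mul_cancel₀ hr.ne', one_smul]; abel
    rw [this, norm_smul, Real.norm_of_nonneg (inv_pos.2 hr).le, inv_mul_lt_iff₀ hr]
    linarith

omit [NormedSpace ℝ X] in
lemma upperDensity_eq_zero_of_eventually {m : ℕ} {φ : Measure X} {a : X}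
    (h : ∀ᶠ r in 𝓝[>] (0 : ℝ), φ (closedBall a r) = 0) : upperDensity m φ a = 0 := by
  refine le_antisymm (Filter.limsup_le_of_le (by isBoundedDefault) ?_) bot_le
  filter_upwards [h] with r hr
  simp [hr]

omit [NormedSpace ℝ X] in
lemma lowerDensity_eq_top_of_eventually {m : ℕ} {φ : Measure X} {a : X}
    (h : ∀ M : ℝ≥0, ∀ᶠ r in 𝓝[>] (0 : ℝ),
      (M : ℝ≥0∞) * ENNReal.ofReal (r ^ m) ≤ φ (closedBall a r)) :
    lowerDensity m φ a = ⊤ := by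
  refine ENNReal.eq_top_of_forall_nnreal_le fun M =>
    Filter.le_liminf_of_le (by isBoundedDefault) ?_
  filter_upwards [h (M * (ballVol m).toNNReal), self_mem_nhdsWithin] with r hM hr0
  have hr : ENNReal.ofReal (r ^ m) ≠ 0 := (ENNReal.ofReal_pos.2 (pow_pos hr0 m)).ne'
  rw [ENNReal.le_div_iff_mul_le (Or.inl (mul_ne_zero (ballVol_ne_zero m) hr))
    (Or.inl (ENNReal.mul_ne_top (ballVol_ne_top m) ENNReal.ofReal_ne_top)),
    ← mul_assoc, ← ENNReal.coe_toNNReal (ballVol_ne_top m), ← ENNReal.coe_mul]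
  exact hM

lemma tanLower_subset_tanUpper (m : ℕ) (φ : Measure X) (a : X) :
    TanLower m φ a ⊆ TanUpper m φ a := by
  intro v hv ε hε
  obtain ⟨η, hη, hball⟩ := hv ε hε
  set K := ‖v‖ + ε
  have hK : 0 < K := by positivity
  have hc : 0 < ENNReal.ofReal η / (ballVol m * ENNReal.ofReal (K ^ m)) :=
    ENNReal.div_pos (by positivity) (ENNReal.mul_ne_top (ballVol_ne_top m) ENNReal.ofReal_ne_top)
  refine hc.trans_le (le_trans (Filter.le_liminf_of_le (by isBoundedDefault) ?_)
    Filter.liminf_le_limsup)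
  filter_upwards [Ioc_mem_nhdsGT (mul_pos hK hη)] with s ⟨hs0, hsη⟩
  obtain ⟨r, hr0, hrη, rfl⟩ : ∃ r, 0 < r ∧ r ≤ η ∧ K * r = s :=
    ⟨s / K, div_pos hs0 hK, (div_le_iff₀' hK).2 hsη, mul_div_cancel₀ s hK.ne'⟩
  have hr : ENNReal.ofReal (r ^ m) ≠ 0 := (ENNReal.ofReal_pos.2 (by positivity)).ne'
  calc ENNReal.ofReal η / (ballVol m * ENNReal.ofReal (K ^ m))
      = ENNReal.ofReal (η * r ^ m) / (ballVol m * ENNReal.ofReal ((K * r) ^ m)) := by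
        rw [mul_pow, ENNReal.ofReal_mul hη.le, ENNReal.ofReal_mul (by positivity), ← mul_assoc,
          ENNReal.mul_div_mul_right _ _ hr ENNReal.ofReal_ne_top]
    _ ≤ φ.restrict (ECone a v ε) (closedBall a (K * r)) / _ := by
        gcongr
        calc ENNReal.ofReal (η * r ^ m) ≤ φ (ball (a + r • v) (ε * r)) := hball r hr0 hrη
          _ ≤ φ (closedBall a (K * r) ∩ ECone a v ε) :=
            measure_mono (ball_add_smul_subset_closedBall_inter_ECone a v hr0)
          _ ≤ _ := Measure.le_restrict_apply _ _

lemma norm_le_abs_add_abs (p : ℝ²) : ‖p‖ ≤ |p 0| + |p 1| := by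
  rw [EuclideanSpace.norm_eq, Fin.sum_univ_two, Real.sqrt_le_iff]
  simp only [Real.norm_eq_abs, sq_abs]
  constructor
  · positivity
  · nlinarith [abs_nonneg (p 0), abs_nonneg (p 1), sq_abs (p 0), sq_abs (p 1)]

lemma isometry_vert (c : ℝ) : Isometry fun t : ℝ => !₂[c, t] :=
  Isometry.of_dist_eq fun s t => by
    simp [EuclideanSpace.dist_eq, Real.dist_eq, Fin.sum_univ_two, Real.sqrt_sq_eq_abs]

lemma isometry_horiz : Isometry fun t : ℝ => !₂[t, 0] :=
  Isometry.of_dist_eq fun s t => by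
    simp [EuclideanSpace.dist_eq, Real.dist_eq, Fin.sum_univ_two, Real.sqrt_sq_eq_abs]

lemma hausdorffMeasure_image_of_isometry {f : ℝ → ℝ²} (hf : Isometry f) (s : Set ℝ) :
    μH[1] (f '' s) = volume s := by
  rw [hf.hausdorffMeasure_image (Or.inl zero_le_one), hausdorffMeasure_real]

def vertSeg (c h : ℝ) : Set ℝ² := {p | p 0 = c ∧ 0 ≤ p 1 ∧ p 1 ≤ h}

lemma vertSeg_eq_image (c h : ℝ) : vertSeg c h = (fun t => !₂[c, t]) '' Icc 0 h := by
  ext p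
  constructor
  · rintro ⟨hp0, hp1⟩
    refine ⟨p 1, hp1, ?_⟩
    ext i; fin_cases i <;> simp [hp0]
  · rintro ⟨t, ht, rfl⟩
    simpa [vertSeg] using ht

lemma hausdorffMeasure_vertSeg (c h : ℝ) : μH[1] (vertSeg c h) = ENNReal.ofReal h := by
  rw [vertSeg_eq_image, hausdorffMeasure_image_of_isometry (isometry_vert c), Real.volume_Icc,
    sub_zero]

lemma measurableSet_vertSeg (c h : ℝ) : MeasurableSet (vertSeg c h) := by
  rw [vertSeg_eq_image]
  exact (isCompact_Icc.image (isometry_vert c).continuous).isClosed.measurableSet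

def comb (c h : ℕ → ℝ) : Set ℝ² :=
  {p | p 1 = 0 ∧ |p 0| ≤ 1} ∪ ⋃ n, (vertSeg (c n) (h n) ∪ vertSeg (-c n) (h n))

lemma hausdorffMeasure_comb_lt_top {c h : ℕ → ℝ} (hh : Summable h) :
    μH[1] (comb c h) < ⊤ := by
  have hbase : {p : ℝ² | p 1 = 0 ∧ |p 0| ≤ 1} ⊆ (fun t => !₂[t, 0]) '' Icc (-1) 1 := by
    rintro p ⟨hp1, hp0⟩
    refine ⟨p 0, abs_le.1 hp0, ?_⟩
    ext i; fin_cases i <;> simp [hp1]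
  calc μH[1] (comb c h)
      ≤ μH[1] ((fun t => !₂[t, 0]) '' Icc (-1) 1) +
        ∑' n, (μH[1] (vertSeg (c n) (h n)) + μH[1] (vertSeg (-c n) (h n))) :=
        (measure_union_le _ _).trans (add_le_add (measure_mono hbase)
          ((measure_iUnion_le _).trans (ENNReal.tsum_le_tsum fun n => measure_union_le _ _)))
    _ < ⊤ := by
      simp only [hausdorffMeasure_image_of_isometry isometry_horiz, hausdorffMeasure_vertSeg,
        ENNReal.tsum_add, Real.volume_Icc]
      exact ENNReal.add_lt_top.2 ⟨ENNReal.ofReal_lt_top,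
        ENNReal.add_lt_top.2 ⟨hh.tsum_ofReal_lt_top, hh.tsum_ofReal_lt_top⟩⟩

lemma setOf_apply_one_eq_zero_subset_tanLower {S : Set ℝ²}
    (hS : {p : ℝ² | p 1 = 0 ∧ |p 0| ≤ 1} ⊆ S) :
    {v : ℝ² | v 1 = 0} ⊆ TanLower 1 (μH[1].restrict S) 0 := by
  intro v hv ε hε
  refine ⟨min ε (|v 0| + ε)⁻¹, by positivity, fun r hr hrη => ?_⟩
  have hrv : (0 : ℝ²) + r • v = !₂[r * v 0, 0] := by
    ext i; fin_cases i <;> simp [show v 1 = 0 from hv]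
  have hsub : (fun t => !₂[t, 0]) '' Ioo (r * v 0 - ε * r) (r * v 0 + ε * r) ⊆
      ball ((0 : ℝ²) + r • v) (ε * r) ∩ S := by
    rintro _ ⟨t, ht, rfl⟩
    have hdist : |t - r * v 0| < ε * r :=
      abs_sub_lt_iff.2 ⟨by linarith [ht.2], by linarith [ht.1]⟩
    refine ⟨by rwa [hrv, mem_ball, isometry_horiz.dist_eq, Real.dist_eq], hS ⟨by simp, ?_⟩⟩
    have hr1 : r * (|v 0| + ε) ≤ 1 :=
      calc r * (|v 0| + ε) ≤ (|v 0| + ε)⁻¹ * (|v 0| + ε) := by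
            gcongr; exact hrη.trans (min_le_right _ _)
        _ = 1 := inv_mul_cancel₀ (by positivity)
    calc |!₂[t, (0 : ℝ)] 0| = |(t - r * v 0) + r * v 0| := by simp
      _ ≤ ε * r + r * |v 0| := by
        grw [abs_add_le, hdist, abs_mul, abs_of_pos hr]
      _ ≤ 1 := by linarith
  calc ENNReal.ofReal (min ε (|v 0| + ε)⁻¹ * r ^ 1)
      ≤ ENNReal.ofReal (r * v 0 + ε * r - (r * v 0 - ε * r)) := by
        gcongr
        nlinarith [min_le_left ε (|v 0| + ε)⁻¹]
    _ = μH[1] ((fun t => !₂[t, 0]) '' Ioo (r * v 0 - ε * r) (r * v 0 + ε * r)) := by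
        rw [hausdorffMeasure_image_of_isometry isometry_horiz, Real.volume_Ioo]
    _ ≤ μH[1].restrict S (ball (0 + r • v) (ε * r)) :=
        (measure_mono hsub).trans (Measure.le_restrict_apply _ _)

lemma notMem_ECone_of_abs_le {p v : ℝ²} {ε κ : ℝ} (hκ : 0 ≤ κ)
    (hp : |p 1| ≤ κ * |p 0|) (hv : κ * (|v 0| + ε) ≤ |v 1| - ε) : p ∉ ECone 0 v ε := by
  rintro ⟨u, hu, hupv⟩
  have hcoord : ∀ i, |u * p i - v i| < ε := fun i =>
    (PiLp.norm_apply_le (u • (p - 0) - v) i).trans_lt hupv |>.trans_eq' (by simp)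
  have h0 : u * |p 0| < |v 0| + ε := by
    have := abs_sub_abs_le_abs_sub (u * p 0) (v 0)
    rw [abs_mul, abs_of_pos hu] at this
    linarith [hcoord 0]
  have h1 : |v 1| - ε < u * |p 1| := by
    have := abs_sub_abs_le_abs_sub (v 1) (u * p 1)
    rw [abs_mul, abs_of_pos hu, abs_sub_comm] at this
    linarith [hcoord 1]
  nlinarith [mul_le_mul_of_nonneg_left hp hu.le, mul_le_mul_of_nonneg_left h0.le hκ]

lemma tanUpper_subset_setOf_apply_one_eq_zero {S : Set ℝ²}
    (hS : ∀ κ > 0, ∀ᶠ p in 𝓝 (0 : ℝ²), p ∈ S → |p 1| ≤ κ * |p 0|)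
    (m : ℕ) (μ : Measure ℝ²) :
    TanUpper m (μ.restrict S) 0 ⊆ {v : ℝ² | v 1 = 0} := by
  intro v hv
  by_contra hv0
  have hv1 : 0 < |v 1| := abs_pos.2 hv0
  set ε := |v 1| / 2
  set κ := |v 1| / (2 * |v 0| + |v 1|)
  have hκ : 0 < κ := by positivity
  have hκv : κ * (|v 0| + ε) ≤ |v 1| - ε := by
    apply le_of_eq
    simp only [κ, ε]
    field_simp
    ring
  obtain ⟨δ, hδ, hflat⟩ := Metric.eventually_nhds_iff_ball.1 (hS κ hκ)
  refine (hv ε (by positivity)).ne' (upperDensity_eq_zero_of_eventually ?_)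
  filter_upwards [Ioo_mem_nhdsGT hδ] with r hr
  rw [Measure.restrict_apply measurableSet_closedBall, Measure.restrict_apply
    (measurableSet_closedBall.inter (isOpen_ECone 0 v ε).measurableSet)]
  refine measure_mono_null (fun p ⟨⟨hpr, hpE⟩, hpS⟩ => ?_) measure_empty
  exact notMem_ECone_of_abs_le hκ.le (hflat p (closedBall_subset_ball hr.2 hpr) hpS) hκv hpE

lemma eventually_abs_le_mul_abs_of_mem_comb {c h : ℕ → ℝ} {γ : ℝ} (hγ : 1 < γ)
    (hh : ∀ n, h n ≤ |c n| ^ γ) (κ : ℝ) (hκ : 0 < κ) :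
    ∀ᶠ p in 𝓝 (0 : ℝ²), p ∈ comb c h → |p 1| ≤ κ * |p 0| := by
  filter_upwards [ball_mem_nhds (0 : ℝ²) (Real.rpow_pos_of_pos hκ (γ - 1)⁻¹)] with p hp hpS
  rcases hpS with ⟨hp1, -⟩ | hpS
  · simp [hp1]; positivity
  obtain ⟨n, hn⟩ := mem_iUnion.1 hpS
  obtain ⟨hp0, hp1, hph⟩ : |p 0| = |c n| ∧ 0 ≤ p 1 ∧ p 1 ≤ h n := by
    rcases hn with ⟨h0, h1, h2⟩ | ⟨h0, h1, h2⟩ <;> simp [h0, h1, h2]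
  have hsmall : |p 0| ^ (γ - 1) ≤ κ := by
    refine ((Real.lt_rpow_inv_iff_of_pos (abs_nonneg _) hκ.le (by linarith)).1 ?_).le
    exact (PiLp.norm_apply_le p 0).trans_lt (mem_ball_zero_iff.1 hp)
  calc |p 1| = p 1 := abs_of_nonneg hp1
    _ ≤ |p 0| ^ ((γ - 1) + 1) := by rw [sub_add_cancel, hp0]; exact hph.trans (hh n)
    _ = |p 0| ^ (γ - 1) * |p 0| := by
        rw [Real.rpow_add' (abs_nonneg _) (by linarith), Real.rpow_one]
    _ ≤ κ * |p 0| := by gcongr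

lemma sum_le_hausdorffMeasure_restrict_comb_closedBall {c h : ℕ → ℝ} {F : Finset ℕ}
    {r : ℝ} (hc : Set.InjOn c F) (hr : ∀ n ∈ F, |c n| + h n ≤ r) :
    ∑ n ∈ F, ENNReal.ofReal (h n) ≤ μH[1].restrict (comb c h) (closedBall 0 r) := by
  have hdisj : (F : Set ℕ).PairwiseDisjoint fun n => vertSeg (c n) (h n) :=
    fun m hm n hn hmn => disjoint_left.2 fun p hpm hpn => hmn (hc hm hn (hpm.1.symm.trans hpn.1))
  have hsub : ∀ n ∈ F, vertSeg (c n) (h n) ⊆ closedBall 0 r ∩ comb c h := by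
    intro n hn p hp
    refine ⟨mem_closedBall_zero_iff.2 ?_, Or.inr (mem_iUnion_of_mem n (Or.inl hp))⟩
    calc ‖p‖ ≤ |p 0| + |p 1| := norm_le_abs_add_abs p
      _ ≤ |c n| + h n := by rw [hp.1, abs_of_nonneg hp.2.1]; gcongr; exact hp.2.2
      _ ≤ r := hr n hn
  calc ∑ n ∈ F, ENNReal.ofReal (h n) = ∑ n ∈ F, μH[1] (vertSeg (c n) (h n)) := by
        simp only [hausdorffMeasure_vertSeg]
    _ = μH[1] (⋃ n ∈ F, vertSeg (c n) (h n)) :=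
        (measure_biUnion_finset hdisj fun n _ => measurableSet_vertSeg _ _).symm
    _ ≤ μH[1] (closedBall 0 r ∩ comb c h) := measure_mono (iUnion₂_subset hsub)
    _ ≤ μH[1].restrict (comb c h) (closedBall 0 r) := Measure.le_restrict_apply _ _

lemma eventually_mul_rpow_le {α γ : ℝ} (hσ : α * γ < 1 + α) (M : ℝ) :
    ∀ᶠ x : ℝ in atTop, M * x ^ (-α) ≤ x * (2 * x) ^ (-(α * γ)) := by
  have hlim := (tendsto_rpow_atTop (by linarith : 0 < 1 + α - α * γ)).const_mul_atTop
    (Real.rpow_pos_of_pos two_pos (-(α * γ)))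
  filter_upwards [hlim.eventually_ge_atTop M, eventually_gt_atTop 0] with x hM hx
  calc M * x ^ (-α) ≤ 2 ^ (-(α * γ)) * x ^ (1 + α - α * γ) * x ^ (-α) := by gcongr
    _ = x * (2 * x) ^ (-(α * γ)) := by
        rw [mul_assoc, ← Real.rpow_add hx, Real.mul_rpow zero_le_two hx.le,
          show 1 + α - α * γ + -α = 1 + -(α * γ) by ring, Real.rpow_add hx, Real.rpow_one]
        ring

lemma ofReal_mul_rpow_le_hausdorffMeasure_restrict_comb_closedBall {α γ : ℝ} (hα : 0 < α)
    (hγ : 1 ≤ γ) {N : ℕ} {r : ℝ} (hr : 2 * ((N : ℝ) + 1) ^ (-α) ≤ r) :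
    ENNReal.ofReal (N * (2 * N) ^ (-(α * γ))) ≤
      μH[1].restrict
        (comb (fun n => ((n : ℝ) + 1) ^ (-α)) (fun n => ((n : ℝ) + 1) ^ (-(α * γ))))
        (closedBall 0 r) := by
  calc ENNReal.ofReal (N * (2 * N) ^ (-(α * γ)))
      = (Finset.Ico N (2 * N)).card • ENNReal.ofReal ((2 * N) ^ (-(α * γ))) := by
        rw [Nat.card_Ico, show 2 * N - N = N by omega, ← ENNReal.ofReal_nsmul, nsmul_eq_mul]
    _ ≤ ∑ n ∈ Finset.Ico N (2 * N), ENNReal.ofReal (((n : ℝ) + 1) ^ (-(α * γ))) := by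
        refine Finset.card_nsmul_le_sum _ _ _ fun n hn => ENNReal.ofReal_le_ofReal ?_
        refine Real.rpow_le_rpow_of_nonpos (by positivity) ?_ (by nlinarith)
        exact_mod_cast (Finset.mem_Ico.1 hn).2
    _ ≤ _ := by
        refine sum_le_hausdorffMeasure_restrict_comb_closedBall ?_ fun n hn => ?_
        · intro m _ n _ hmn
          have := Real.rpow_left_injOn (neg_ne_zero.2 hα.ne') (by positivity : (0 : ℝ) ≤ m + 1)
            (by positivity : (0 : ℝ) ≤ n + 1) hmn
          exact_mod_cast add_right_cancel this
        · have hnN : ((n : ℝ) + 1) ^ (-α) ≤ ((N : ℝ) + 1) ^ (-α) :=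
            Real.rpow_le_rpow_of_nonpos (by positivity)
              (by exact_mod_cast Nat.add_le_add_right (Finset.mem_Ico.1 hn).1 1) (by linarith)
          have hhc : ((n : ℝ) + 1) ^ (-(α * γ)) ≤ ((n : ℝ) + 1) ^ (-α) :=
            Real.rpow_le_rpow_of_exponent_le (by linarith [n.cast_nonneg (α := ℝ)])
              (by nlinarith)
          rw [abs_of_pos (by positivity)]
          linarith

lemma eventually_le_hausdorffMeasure_restrict_comb_closedBall {α γ : ℝ} (hα : 0 < α)
    (hγ : 1 ≤ γ) (hσ : α * γ < 1 + α) (M : ℝ≥0) :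
    ∀ᶠ r in 𝓝[>] (0 : ℝ), (M : ℝ≥0∞) * ENNReal.ofReal (r ^ 1) ≤
      μH[1].restrict
        (comb (fun n => ((n : ℝ) + 1) ^ (-α)) (fun n => ((n : ℝ) + 1) ^ (-(α * γ))))
        (closedBall 0 r) := by
  have hN : Tendsto (fun r : ℝ => ⌊(2 * r⁻¹) ^ α⁻¹⌋₊) (𝓝[>] 0) atTop :=
    tendsto_nat_floor_atTop.comp ((tendsto_rpow_atTop (inv_pos.2 hα)).comp
      (tendsto_inv_nhdsGT_zero.const_mul_atTop two_pos))
  have hlarge := tendsto_natCast_atTop_atTop.eventually (eventually_mul_rpow_le hσ (2 * M))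
  filter_upwards [hN.eventually hlarge, hN.eventually (eventually_ge_atTop 1),
    self_mem_nhdsWithin] with r hlarge hN1 (hr : 0 < r)
  set N := ⌊(2 * r⁻¹) ^ α⁻¹⌋₊
  have hN0 : (0 : ℝ) < N := by exact_mod_cast hN1
  have hrN : r ≤ 2 * (N : ℝ) ^ (-α) := by
    have h : (N : ℝ) ^ α ≤ 2 * r⁻¹ :=
      (Real.le_rpow_inv_iff_of_pos hN0.le (by positivity) hα).1 (Nat.floor_le (by positivity))
    rw [Real.rpow_neg hN0.le, ← div_eq_mul_inv, le_div_iff₀ (by positivity)]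
    rw [← div_eq_mul_inv, le_div_iff₀ hr] at h
    linarith
  have hcN : 2 * ((N : ℝ) + 1) ^ (-α) ≤ r := by
    have h : 2 * r⁻¹ < ((N : ℝ) + 1) ^ α :=
      (Real.rpow_inv_lt_iff_of_pos (by positivity) (by positivity) hα).1 (Nat.lt_floor_add_one _)
    rw [Real.rpow_neg (by positivity), ← div_eq_mul_inv, div_le_iff₀ (by positivity)]
    rw [← div_eq_mul_inv, div_lt_iff₀ hr] at h
    linarith
  calc (M : ℝ≥0∞) * ENNReal.ofReal (r ^ 1) = ENNReal.ofReal (M * r) := by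
        rw [pow_one, ENNReal.ofReal_mul M.coe_nonneg, ENNReal.ofReal_coe_nnreal]
    _ ≤ ENNReal.ofReal (N * (2 * N) ^ (-(α * γ))) := by
        refine ENNReal.ofReal_le_ofReal ?_
        calc (M : ℝ) * r ≤ M * (2 * (N : ℝ) ^ (-α)) := by gcongr
          _ ≤ N * (2 * N) ^ (-(α * γ)) := by linarith
    _ ≤ _ := ofReal_mul_rpow_le_hausdorffMeasure_restrict_comb_closedBall hα hγ hcN

theorem stmt12 (γ α : ℝ) (hγ : 1 < γ) (hα1 : γ⁻¹ < α) (hα2 : α < (γ - 1)⁻¹)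
    (A : Set (EuclideanSpace ℝ (Fin 2)))
    (hA : A = {p : EuclideanSpace ℝ (Fin 2) | p 1 = 0 ∧ |p 0| ≤ 1} ∪
      ⋃ n : ℕ, {p : EuclideanSpace ℝ (Fin 2) |
        (p 0 = ((n : ℝ) + 1) ^ (-α) ∨ p 0 = -(((n : ℝ) + 1) ^ (-α))) ∧
        0 ≤ p 1 ∧ p 1 ≤ ((n : ℝ) + 1) ^ (-(α * γ))}) :
    μH[(1 : ℝ)] A < ⊤ ∧
    lowerDensity 1 (μH[(1 : ℝ)].restrict A) 0 = ⊤ ∧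
    TanLower 1 (μH[(1 : ℝ)].restrict A) 0 = {v : EuclideanSpace ℝ (Fin 2) | v 1 = 0} ∧
    TanUpper 1 (μH[(1 : ℝ)].restrict A) 0 = {v : EuclideanSpace ℝ (Fin 2) | v 1 = 0} := by
  have hα : 0 < α := (inv_pos.2 (by linarith)).trans hα1
  have hαγ : 1 < α * γ := (inv_lt_iff_one_lt_mul₀ (by linarith)).1 hα1
  have hσ : α * γ < 1 + α := by
    have := (lt_div_iff₀ (sub_pos.2 hγ)).1 (by rwa [one_div])
    linarith
  set c : ℕ → ℝ := fun n => ((n : ℝ) + 1) ^ (-α)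
  set h : ℕ → ℝ := fun n => ((n : ℝ) + 1) ^ (-(α * γ))
  obtain rfl : A = comb c h := by
    rw [hA]; ext p; simp [comb, vertSeg, c, h, or_and_right]
  have hh : ∀ n, h n ≤ |c n| ^ γ := fun n => by
    simp only [c, h]
    rw [abs_of_pos (by positivity), ← Real.rpow_mul (by positivity), neg_mul]
  have hlow := setOf_apply_one_eq_zero_subset_tanLower (S := comb c h) subset_union_left
  have hup := tanUpper_subset_setOf_apply_one_eq_zero
    (eventually_abs_le_mul_abs_of_mem_comb hγ hh) 1 μH[1]
  have hlu := tanLower_subset_tanUpper 1 (μH[1].restrict (comb c h)) 0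
  refine ⟨hausdorffMeasure_comb_lt_top ?_, lowerDensity_eq_top_of_eventually
    (eventually_le_hausdorffMeasure_restrict_comb_closedBall hα hγ.le hσ),
    (hlu.trans hup).antisymm hlow, hup.antisymm (hlow.trans hlu)⟩
  simpa using (summable_nat_add_iff 1).2 (Real.summable_nat_rpow.2 (by linarith : -(α * γ) < -1))
end

section
/- Let $B \subseteq \mathbb{R}^n$, $a \in \mathrm{Clos}\,B$, and $M = \{a + v : v \in \mathrm{Tan}^*(B,a)\}$. Then $\lim_{r\to 0} r^{-1} \sup\{\delta_M(x) : x \in \mathbf{B}(a,r) \cap B\} = 0$. -/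
/-!
A point `x ∈ B ∩ closedBall a r` rescales to `r⁻¹ • (x - a)` in the unit ball. If such points
stayed `ε r`-far from `a + Tan^*(B,a)` along a sequence `r → 0`, compactness of the ball would give
a convergent subsequence of the rescaled points. Its limit `v` is an upper tangent vector, and
since `Tan^*(B,a)` is a cone, `a + r • v` lies in `a + Tan^*(B,a)` at distance `o(r)` from the bad
points, a contradiction.
-/

open MeasureTheory Metric Filter Set
open scoped ENNReal Topology

variable {X : Type*} [NormedAddCommGroup X] [NormedSpace ℝ X]

/-- The upper tangent cone `Tan^*(B,a)`: the set of `v` with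
`liminf_{r→0+} r⁻¹ δ_B(a+rv) = 0`. -/
def TanStarPt (B : Set X) (a : X) : Set X :=
  {v | ∀ ε : ℝ, 0 < ε → ∃ᶠ r in 𝓝[>] (0 : ℝ), Metric.infDist (a + r • v) B < ε * r}

/-- The lower tangent cone `Tan_*(B,a)`: the set of `v` with
`lim_{r→0+} r⁻¹ δ_B(a+rv) = 0`. -/
def TanLowerPt (B : Set X) (a : X) : Set X :=
  {v | ∀ ε : ℝ, 0 < ε → ∀ᶠ r in 𝓝[>] (0 : ℝ), Metric.infDist (a + r • v) B < ε * r}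

section TangentCone

variable {B : Set X} {a : X}

lemma dist_add_smul_eq_mul_norm_inv_smul_sub (x v : X) {r : ℝ} (hr : 0 < r) :
    dist x (a + r • v) = r * ‖r⁻¹ • (x - a) - v‖ := by
  rw [dist_eq_norm, ← norm_smul_of_nonneg hr.le, smul_sub, smul_inv_smul₀ hr.ne', sub_sub]

lemma norm_inv_smul_sub_le_one {x : X} {r : ℝ} (hr : 0 < r) (hx : x ∈ closedBall a r) :
    ‖r⁻¹ • (x - a)‖ ≤ 1 := by
  rw [norm_smul, norm_inv, Real.norm_of_nonneg hr.le, ← dist_eq_norm]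
  exact inv_mul_le_one_of_le₀ hx hr.le

lemma smul_mem_tanStarPt {v : X} (hv : v ∈ TanStarPt B a) {c : ℝ} (hc : 0 < c) :
    c • v ∈ TanStarPt B a := by
  intro ε hε
  have hdiv : Tendsto (· / c) (𝓝[>] (0 : ℝ)) (𝓝[>] 0) :=
    tendsto_nhdsWithin_of_tendsto_nhds_of_eventually_within _
      (by simpa using ((tendsto_id (x := 𝓝 (0 : ℝ))).div_const c).mono_left nhdsWithin_le_nhds)
      (eventually_nhdsWithin_of_forall fun s hs => div_pos hs hc)
  refine hdiv.frequently ((hv (ε / c) (by positivity)).mono fun s hs => ?_)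
  rwa [smul_smul, div_mul_cancel₀ _ hc.ne', mul_div_assoc', ← div_mul_eq_mul_div]

lemma mem_tanStarPt_of_tendsto {ι : Type*} {l : Filter ι} [l.NeBot] {r : ι → ℝ} {x : ι → X}
    {v : X} (hr : Tendsto r l (𝓝[>] 0)) (hx : ∀ i, x i ∈ B)
    (hv : Tendsto (fun i => (r i)⁻¹ • (x i - a)) l (𝓝 v)) : v ∈ TanStarPt B a := by
  intro ε hε
  have hclose : ∀ᶠ i in l, ‖(r i)⁻¹ • (x i - a) - v‖ < ε :=
    (tendsto_iff_norm_sub_tendsto_zero.mp hv).eventually (gt_mem_nhds hε)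
  refine hr.frequently (Eventually.frequently ?_)
  filter_upwards [hclose, hr.eventually self_mem_nhdsWithin] with i hi (hri : 0 < r i)
  calc infDist (a + r i • v) B ≤ dist (x i) (a + r i • v) := by
        rw [dist_comm]; exact infDist_le_dist_of_mem (hx i)
    _ = r i * ‖(r i)⁻¹ • (x i - a) - v‖ := dist_add_smul_eq_mul_norm_inv_smul_sub _ _ hri
    _ < ε * r i := by rw [mul_comm ε]; exact mul_lt_mul_of_pos_left hi hri

lemma infDist_image_tanStarPt_le {v : X} (hv : v ∈ TanStarPt B a) (x : X) {r : ℝ} (hr : 0 < r) :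
    infDist x ((a + ·) '' TanStarPt B a) ≤ r * ‖r⁻¹ • (x - a) - v‖ := by
  rw [← dist_add_smul_eq_mul_norm_inv_smul_sub x v hr]
  exact infDist_le_dist_of_mem ⟨r • v, smul_mem_tanStarPt hv hr, rfl⟩

theorem eventually_infDist_image_tanStarPt_le [ProperSpace X] (B : Set X) (a : X) {ε : ℝ}
    (hε : 0 < ε) : ∀ᶠ r in 𝓝[>] (0 : ℝ),
      ∀ x ∈ B ∩ closedBall a r, infDist x ((a + ·) '' TanStarPt B a) ≤ ε * r := by
  by_contra hfar
  obtain ⟨r, hr, hbad⟩ :=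
    exists_seq_forall_of_frequently ((not_eventually.mp hfar).and_eventually self_mem_nhdsWithin)
  have hrpos : ∀ k, 0 < r k := fun k => (hbad k).2
  choose x hx hxfar using fun k => not_forall₂.mp (hbad k).1
  obtain ⟨v, -, φ, hφ, hv⟩ := (isCompact_closedBall (0 : X) 1).tendsto_subseq
    (x := fun k => (r k)⁻¹ • (x k - a))
    fun k => mem_closedBall_zero_iff.mpr (norm_inv_smul_sub_le_one (hrpos k) (hx k).2)
  have hvT : v ∈ TanStarPt B a :=
    mem_tanStarPt_of_tendsto (hr.comp hφ.tendsto_atTop) (fun k => (hx (φ k)).1) hv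
  obtain ⟨k, hk⟩ :=
    ((tendsto_iff_norm_sub_tendsto_zero.mp hv).eventually (gt_mem_nhds hε)).exists
  refine hxfar (φ k) ((infDist_image_tanStarPt_le hvT _ (hrpos (φ k))).trans ?_)
  rw [mul_comm ε]
  exact mul_le_mul_of_nonneg_left hk.le (hrpos (φ k)).le

end TangentCone

theorem stmt13_general {n : ℕ} (B : Set (EuclideanSpace ℝ (Fin n)))
    (a : EuclideanSpace ℝ (Fin n))
    (M : Set (EuclideanSpace ℝ (Fin n))) (hM : M = (fun v => a + v) '' TanStarPt B a) :
    ∀ ε : ℝ, 0 < ε → ∀ᶠ r in 𝓝[>] (0 : ℝ),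
      ∀ x ∈ B ∩ Metric.closedBall a r, Metric.infDist x M ≤ ε * r := by
  subst hM
  exact fun ε hε => eventually_infDist_image_tanStarPt_le B a hε

theorem stmt13 {n : ℕ} (B : Set (EuclideanSpace ℝ (Fin n)))
    (a : EuclideanSpace ℝ (Fin n)) (ha : a ∈ closure B)
    (M : Set (EuclideanSpace ℝ (Fin n))) (hM : M = (fun v => a + v) '' TanStarPt B a) :
    ∀ ε : ℝ, 0 < ε → ∀ᶠ r in 𝓝[>] (0 : ℝ),
      ∀ x ∈ B ∩ Metric.closedBall a r, Metric.infDist x M ≤ ε * r :=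
  stmt13_general B a M hM
end

section
/- Let $B \subseteq \mathbb{R}^n$, $a \in \mathrm{Clos}\,B$, and $M = \{a + v : v \in \mathrm{Tan}_*(B,a)\}$. Then $\lim_{r\to 0} r^{-1} \sup\{\delta_B(x) : x \in \mathbf{B}(a,r) \cap M\} = 0$. -/
/-!
Since `X` is proper, the directions of norm at most `1` in `Tan_*(B,a)` form a totally bounded
set, and the cone is invariant under positive scaling, so `x = a + v` with `‖v‖ ≤ r` is
`a + r • w` for such a direction `w`. On a finite `ε/2`-net of these directions the defining
limit holds simultaneously, and `δ_B` being `1`-Lipschitz spreads the estimate to all of them.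
-/

open Metric Filter Set
open scoped Topology

variable {X : Type*} [NormedAddCommGroup X] [NormedSpace ℝ X]

lemma smul_mem_tanLowerPt {B : Set X} {a v : X} {c : ℝ} (hv : v ∈ TanLowerPt B a) (hc : 0 < c) :
    c • v ∈ TanLowerPt B a := by
  intro ε hε
  have hscale : Tendsto (fun r : ℝ => r * c) (𝓝[>] 0) (𝓝[>] 0) :=
    tendsto_nhdsWithin_of_tendsto_nhds_of_eventually_within _
      (((continuous_mul_const c).tendsto' 0 0 (zero_mul c)).mono_left nhdsWithin_le_nhds)
      (eventually_nhdsWithin_of_forall fun r hr => mul_pos hr hc)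
  filter_upwards [hscale.eventually (hv (ε / c) (div_pos hε hc))] with r hr
  rwa [mul_smul, show ε / c * (r * c) = ε * r by field_simp] at hr

lemma infDist_add_smul_le_add_mul_dist (B : Set X) (a w u : X) {r : ℝ} (hr : 0 ≤ r) :
    infDist (a + r • w) B ≤ infDist (a + r • u) B + r * dist w u := by
  calc infDist (a + r • w) B ≤ infDist (a + r • u) B + dist (a + r • w) (a + r • u) :=
        infDist_le_infDist_add_dist
    _ = infDist (a + r • u) B + r * dist w u := by
        rw [dist_add_left, dist_smul₀, Real.norm_of_nonneg hr]

lemma TotallyBounded.eventually_infDist_add_smul_le {B : Set X} {a : X} {K : Set X}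
    (hK : TotallyBounded K) (hKtan : K ⊆ TanLowerPt B a) {ε : ℝ} (hε : 0 < ε) :
    ∀ᶠ r in 𝓝[>] (0 : ℝ), ∀ w ∈ K, infDist (a + r • w) B ≤ ε * r := by
  obtain ⟨t, htK, ht, hcover⟩ := finite_approx_of_totallyBounded hK (ε / 2) (half_pos hε)
  have hnet : ∀ᶠ r in 𝓝[>] (0 : ℝ), ∀ u ∈ t, infDist (a + r • u) B < ε / 2 * r :=
    ht.eventually_all.2 fun u hu => hKtan (htK hu) (ε / 2) (half_pos hε)
  filter_upwards [hnet, self_mem_nhdsWithin] with r hr (hr0 : 0 < r) w hw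
  obtain ⟨u, hu, hwu⟩ := mem_iUnion₂.1 (hcover hw)
  calc infDist (a + r • w) B ≤ infDist (a + r • u) B + r * dist w u :=
        infDist_add_smul_le_add_mul_dist B a w u hr0.le
    _ ≤ ε / 2 * r + r * (ε / 2) := by
        gcongr
        · exact (hr u hu).le
        · exact (mem_ball.1 hwu).le
    _ = ε * r := by ring

theorem eventually_infDist_le_of_mem_tanLowerPt [ProperSpace X] (B : Set X) (a : X) {ε : ℝ}
    (hε : 0 < ε) :
    ∀ᶠ r in 𝓝[>] (0 : ℝ), ∀ v ∈ TanLowerPt B a, ‖v‖ ≤ r → infDist (a + v) B ≤ ε * r := by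
  have hK : TotallyBounded (TanLowerPt B a ∩ closedBall 0 1) :=
    (isCompact_closedBall (0 : X) 1).totallyBounded.subset inter_subset_right
  filter_upwards [hK.eventually_infDist_add_smul_le inter_subset_left hε,
    self_mem_nhdsWithin] with r hr (hr0 : 0 < r) v hv hvr
  have hw : r⁻¹ • v ∈ TanLowerPt B a ∩ closedBall 0 1 := by
    refine ⟨smul_mem_tanLowerPt hv (inv_pos.2 hr0), ?_⟩
    rw [mem_closedBall_zero_iff, norm_smul, Real.norm_of_nonneg (inv_nonneg.2 hr0.le)]
    exact inv_mul_le_one_of_le₀ hvr hr0.le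
  simpa [smul_inv_smul₀ hr0.ne'] using hr _ hw

theorem stmt14_general {n : ℕ} (B : Set (EuclideanSpace ℝ (Fin n)))
    (a : EuclideanSpace ℝ (Fin n))
    (M : Set (EuclideanSpace ℝ (Fin n))) (hM : M = (fun v => a + v) '' TanLowerPt B a) :
    ∀ ε : ℝ, 0 < ε → ∀ᶠ r in 𝓝[>] (0 : ℝ),
      ∀ x ∈ M ∩ Metric.closedBall a r, Metric.infDist x B ≤ ε * r := by
  subst hM
  intro ε hε
  filter_upwards [eventually_infDist_le_of_mem_tanLowerPt B a hε] with r hr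
  rintro _ ⟨⟨v, hv, rfl⟩, hvr⟩
  exact hr v hv (by simpa using hvr)

theorem stmt14 {n : ℕ} (B : Set (EuclideanSpace ℝ (Fin n)))
    (a : EuclideanSpace ℝ (Fin n)) (ha : a ∈ closure B)
    (M : Set (EuclideanSpace ℝ (Fin n))) (hM : M = (fun v => a + v) '' TanLowerPt B a) :
    ∀ ε : ℝ, 0 < ε → ∀ᶠ r in 𝓝[>] (0 : ℝ),
      ∀ x ∈ M ∩ Metric.closedBall a r, Metric.infDist x B ≤ ε * r :=
  stmt14_general B a M hM
end

section
/- Let $A$ be a submanifold of $\mathbb{R}^n$ of class $C^2$, $a \in A$, $\nu \in \mathbb{S}^{n-1}$, and $0 < r < \infty$, and suppose the open ball $\mathbf{U}(a + r\nu, r)$ is disjoint from $A$. Then the second fundamental form satisfies $\mathbf{b}_A(a)(v,v) \bullet \nu \leq r^{-1}|v|^2$ for every $v \in \mathrm{Tan}(A,a)$. -/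
open Metric Filter Set
open scoped Topology RealInnerProductSpace

/-!
Move from `a` along the tangent direction `v`: the curve `t ↦ a + t v + f(t v)` lies in `A`,
hence outside the ball `U(a + r ν, r)`, so with `F t = f(t v)` and `v ⊥ ν`, `v ⊥ F t`,
`2 r ⟪F t, ν⟫ ≤ t² ‖v‖² + ‖F t‖²`. Dividing by `t²` and letting `t → 0⁺`, Taylor's theorem
gives `F t / t² → D²f(0)(v, v) / 2` and `F t / t → Df(0) v = 0`, whence
`r ⟪D²f(0)(v, v), ν⟫ ≤ ‖v‖²`.
-/

theorem tendsto_inv_sq_smul_of_deriv_eq_zero {E : Type*} [NormedAddCommGroup E]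
    [NormedSpace ℝ E] {F : ℝ → E} (hF : ContDiff ℝ 2 F) (hF0 : F 0 = 0) (hF'0 : deriv F 0 = 0) :
    Tendsto (fun t : ℝ => (t ^ 2)⁻¹ • F t) (𝓝[≠] 0) (𝓝 ((2 : ℝ)⁻¹ • iteratedDeriv 2 F 0)) := by
  have htaylor := (taylor_tendsto convex_univ (mem_univ 0) hF.contDiffOn).mono_left
    (nhdsWithin_mono _ (subset_univ {0}ᶜ))
  have hpoly : ∀ t : ℝ, taylorWithinEval F 2 univ 0 t = (t ^ 2 * 2⁻¹) • iteratedDeriv 2 F 0 := by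
    intro t
    norm_num [taylor_within_apply, hF0, hF'0, mul_comm]
  have hrem : ∀ t : ℝ, t ≠ 0 → ((t - 0) ^ 2)⁻¹ • (F t - taylorWithinEval F 2 univ 0 t) =
      (t ^ 2)⁻¹ • F t - (2 : ℝ)⁻¹ • iteratedDeriv 2 F 0 := by
    intro t ht
    rw [hpoly, sub_zero, smul_sub, smul_smul, inv_mul_cancel_left₀ (pow_ne_zero 2 ht)]
  rw [← tendsto_sub_nhds_zero_iff]
  exact htaylor.congr' (eventually_nhdsWithin_of_forall hrem)

theorem iteratedDeriv_comp_smul_const {V W : Type*} [NormedAddCommGroup V] [NormedSpace ℝ V]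
    [NormedAddCommGroup W] [NormedSpace ℝ W] {N : WithTop ℕ∞} {f : V → W}
    (hf : ContDiff ℝ N f) (v : V) (x : ℝ) {k : ℕ} (hk : k ≤ N) :
    iteratedDeriv k (fun t : ℝ => f (t • v)) x = iteratedFDeriv ℝ k f (x • v) fun _ => v := by
  have hcomp := (ContinuousLinearMap.toSpanSingleton ℝ v).iteratedFDeriv_comp_right hf x hk
  simp only [Function.comp_def, ContinuousLinearMap.toSpanSingleton_apply] at hcomp
  simp only [iteratedDeriv_eq_iteratedFDeriv, hcomp,
    ContinuousMultilinearMap.compContinuousLinearMap_apply,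
    ContinuousLinearMap.toSpanSingleton_apply, one_smul]

section InnerProductSpace

variable {E : Type*} [NormedAddCommGroup E] [InnerProductSpace ℝ E]

theorem two_mul_inner_le_norm_sq_of_le_norm_sub {x ν : E} {r : ℝ} (hν : ‖ν‖ = 1)
    (hr : 0 ≤ r) (h : r ≤ ‖x - r • ν‖) : 2 * r * ⟪x, ν⟫ ≤ ‖x‖ ^ 2 := by
  have hsq := pow_le_pow_left₀ hr h 2
  rw [norm_sub_sq_real, norm_smul, hν, real_inner_smul_right, Real.norm_of_nonneg hr] at hsq
  linarith

theorem inner_iteratedDeriv_two_le_of_le_norm_sub {F : ℝ → E} {v ν : E} {r : ℝ}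
    (hF : ContDiff ℝ 2 F) (hF0 : F 0 = 0) (hF'0 : deriv F 0 = 0)
    (hν : ‖ν‖ = 1) (hvν : ⟪v, ν⟫ = 0) (hr : 0 < r)
    (hout : ∀ᶠ t in 𝓝[>] (0 : ℝ), r ≤ ‖t • v + F t - r • ν‖) :
    ⟪iteratedDeriv 2 F 0, ν⟫ ≤ r⁻¹ * ‖v‖ ^ 2 := by
  have hquad := (tendsto_inv_sq_smul_of_deriv_eq_zero hF hF0 hF'0).mono_left
    (nhdsGT_le_nhdsNE 0)
  have hslope : Tendsto (fun t : ℝ => t⁻¹ • F t) (𝓝[>] 0) (𝓝 0) := by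
    have := hasDerivAt_iff_tendsto_slope.1 ((hF.differentiable (by norm_num)) 0).hasDerivAt
    simpa [slope_fun_def, hF0, hF'0] using this.mono_left (nhdsGT_le_nhdsNE 0)
  have hlhs : Tendsto (fun t : ℝ => 2 * r * ⟪(t ^ 2)⁻¹ • F t, ν⟫) (𝓝[>] 0)
      (𝓝 (r * ⟪iteratedDeriv 2 F 0, ν⟫)) := by
    convert (hquad.inner tendsto_const_nhds).const_mul (2 * r) using 2
    rw [real_inner_smul_left]
    ring
  have hrhs : Tendsto (fun t : ℝ => ‖v + t⁻¹ • F t‖ ^ 2) (𝓝[>] 0) (𝓝 (‖v‖ ^ 2)) := by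
    simpa using (tendsto_const_nhds.add hslope).norm.pow 2
  have hle : ∀ᶠ t in 𝓝[>] (0 : ℝ), 2 * r * ⟪(t ^ 2)⁻¹ • F t, ν⟫ ≤ ‖v + t⁻¹ • F t‖ ^ 2 := by
    filter_upwards [hout, self_mem_nhdsWithin] with t ht (ht0 : 0 < t)
    have hx : t • v + F t = t • (v + t⁻¹ • F t) := by
      rw [smul_add, smul_smul, mul_inv_cancel₀ ht0.ne', one_smul]
    have key := two_mul_inner_le_norm_sq_of_le_norm_sub hν hr.le ht
    rw [inner_add_left, real_inner_smul_left, hvν, mul_zero, zero_add, hx, norm_smul, mul_pow,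
      Real.norm_eq_abs, sq_abs] at key
    rw [real_inner_smul_left, ← mul_le_mul_iff_right₀ (by positivity : 0 < t ^ 2)]
    calc t ^ 2 * (2 * r * ((t ^ 2)⁻¹ * ⟪F t, ν⟫)) = 2 * r * ⟪F t, ν⟫ := by field_simp
      _ ≤ _ := key
  rw [le_inv_mul_iff₀ hr]
  exact le_of_tendsto_of_tendsto hlhs hrhs hle

theorem eventually_add_mem_of_inter_eq_graph {A U : Set E} {a : E} {T : Submodule ℝ E}
    {f : T → Tᗮ} (hf : Continuous f) (hf0 : f 0 = 0) (hU : IsOpen U) (haU : a ∈ U)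
    (hgraph : A ∩ U = {x ∈ U | ∃ χ : T, x = a + (χ : E) + (f χ : E)}) :
    ∀ᶠ χ : T in 𝓝 0, a + (χ : E) + (f χ : E) ∈ A := by
  have hcont : Continuous fun χ : T => a + (χ : E) + (f χ : E) := by fun_prop
  have hU0 : U ∈ 𝓝 (a + ((0 : T) : E) + (f 0 : E)) := by simpa [hf0] using hU.mem_nhds haU
  filter_upwards [hcont.continuousAt.preimage_mem_nhds hU0] with χ hχU
  exact (hgraph.symm ▸ ⟨hχU, χ, rfl⟩ : _ ∈ A ∩ U).1

end InnerProductSpace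

/- A `C²` submanifold `A` of `ℝⁿ` is represented near `a ∈ A` as the graph of a `C²`
function `f : T → Tᗮ` over its tangent space `T = Tan(A,a)`, normalized so that
`f 0 = 0` and `Df(0) = 0`; under this normalization the second fundamental form of
`A` at `a` is `b_A(a) = D²f(0)`. -/
theorem stmt17_general {n : ℕ} (A : Set (EuclideanSpace ℝ (Fin n)))
    (a : EuclideanSpace ℝ (Fin n))
    (T : Submodule ℝ (EuclideanSpace ℝ (Fin n)))
    (f : T → Tᗮ) (hf : ContDiff ℝ 2 f) (hf0 : f 0 = 0) (hDf0 : fderiv ℝ f 0 = 0)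
    (U : Set (EuclideanSpace ℝ (Fin n))) (hU : IsOpen U) (haU : a ∈ U)
    (hgraph : A ∩ U = {x ∈ U | ∃ χ : T, x = a + (χ : EuclideanSpace ℝ (Fin n)) +
      (f χ : EuclideanSpace ℝ (Fin n))})
    (ν : EuclideanSpace ℝ (Fin n)) (hν : ‖ν‖ = 1) (hνnor : ν ∈ Tᗮ)
    (r : ℝ) (hr : 0 < r)
    (hball : Metric.ball (a + r • ν) r ∩ A = ∅) :
    ∀ v : T, ⟪((iteratedFDeriv ℝ 2 f 0 fun _ => v : Tᗮ) : EuclideanSpace ℝ (Fin n)), ν⟫ ≤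
      r⁻¹ * ‖v‖ ^ 2 := by
  intro v
  set F : ℝ → EuclideanSpace ℝ (Fin n) := fun t => (f (t • v) : EuclideanSpace ℝ (Fin n))
  have hF : ContDiff ℝ 2 F := Tᗮ.subtypeL.contDiff.comp (hf.comp (contDiff_id.smul contDiff_const))
  have hderiv : ∀ k ≤ 2, iteratedDeriv k F 0 = (iteratedFDeriv ℝ k f 0 fun _ => v : Tᗮ) := by
    intro k hk
    change iteratedDeriv k (fun t : ℝ => (Tᗮ.subtypeL ∘ f) (t • v)) 0 = _
    rw [iteratedDeriv_comp_smul_const (Tᗮ.subtypeL.contDiff.comp hf) v 0 (mod_cast hk),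
      zero_smul, Tᗮ.subtypeL.iteratedFDeriv_comp_left hf.contDiffAt (mod_cast hk)]
    rfl
  have hF'0 : deriv F 0 = 0 := by
    simpa [hDf0] using hderiv 1 (by norm_num)
  have hout : ∀ᶠ t in 𝓝[>] (0 : ℝ), r ≤ ‖t • (v : EuclideanSpace ℝ (Fin n)) + F t - r • ν‖ := by
    have hsmul : Tendsto (fun t : ℝ => t • v) (𝓝 0) (𝓝 0) := by
      simpa using (tendsto_id (x := 𝓝 (0 : ℝ))).smul_const v
    filter_upwards [nhdsWithin_le_nhds (hsmul.eventually
      (eventually_add_mem_of_inter_eq_graph hf.continuous hf0 hU haU hgraph))] with t ht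
    have hnot : a + (t • v : T) + (f (t • v) : EuclideanSpace ℝ (Fin n)) ∉ ball (a + r • ν) r :=
      fun hmem => (hball.subset ⟨hmem, ht⟩ : _ ∈ (∅ : Set _))
    simpa [dist_eq_norm, F, add_assoc] using hnot
  rw [← hderiv 2 le_rfl]
  exact inner_iteratedDeriv_two_le_of_le_norm_sub hF (by simp [F, hf0]) hF'0 hν
    (Submodule.inner_right_of_mem_orthogonal v.2 hνnor) hr hout

theorem stmt17 {n m : ℕ} (A : Set (EuclideanSpace ℝ (Fin n)))
    (a : EuclideanSpace ℝ (Fin n)) (haA : a ∈ A)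
    (T : Submodule ℝ (EuclideanSpace ℝ (Fin n))) (hT : Module.finrank ℝ T = m)
    (f : T → Tᗮ) (hf : ContDiff ℝ 2 f) (hf0 : f 0 = 0) (hDf0 : fderiv ℝ f 0 = 0)
    (U : Set (EuclideanSpace ℝ (Fin n))) (hU : IsOpen U) (haU : a ∈ U)
    (hgraph : A ∩ U = {x ∈ U | ∃ χ : T, x = a + (χ : EuclideanSpace ℝ (Fin n)) +
      (f χ : EuclideanSpace ℝ (Fin n))})
    (ν : EuclideanSpace ℝ (Fin n)) (hν : ‖ν‖ = 1) (hνnor : ν ∈ Tᗮ)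
    (r : ℝ) (hr : 0 < r)
    (hball : Metric.ball (a + r • ν) r ∩ A = ∅) :
    ∀ v : T, ⟪((iteratedFDeriv ℝ 2 f 0 fun _ => v : Tᗮ) : EuclideanSpace ℝ (Fin n)), ν⟫ ≤
      r⁻¹ * ‖v‖ ^ 2 :=
  stmt17_general A a T f hf hf0 hDf0 U hU haU hgraph ν hν hνnor r hr hball
end

section
/- Let $B \subseteq \mathbb{R}^n$ and $a \in \mathrm{Clos}\,B$. Suppose $\mathrm{Tan}_*(B,a) = \mathrm{Tan}^*(B,a)$ and this common tangent cone is an $m$-dimensional linear subspace $T$ of $\mathbb{R}^n$ for some $0 \leq m \leq n$. Then, with $M = a + T$, one has $\lim_{r\to 0} r^{-1}\sup\{|\delta_M(x) - \delta_B(x)| : x \in \mathbf{B}(a,r)\} = 0$ and $\lim_{r\to 0} r^{-1}\sup\{\delta_M(x) : x \in \mathbf{B}(a,r) \cap B\} = 0$; i.e., $B$ is pointwise differentiable of order $1$ at $a$. -/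
open MeasureTheory Metric Filter Set
open scoped ENNReal Topology

variable {X : Type*} [NormedAddCommGroup X] [NormedSpace ℝ X]

section Aux

variable {n : ℕ} {B : Set (EuclideanSpace ℝ (Fin n))} {a : EuclideanSpace ℝ (Fin n)}
  {T : Submodule ℝ (EuclideanSpace ℝ (Fin n))} {M : Set (EuclideanSpace ℝ (Fin n))}

lemma aux_haM (hM : M = (fun v => a + v) '' (T : Set (EuclideanSpace ℝ (Fin n)))) : a ∈ M := by
  rw [hM]; exact ⟨0, T.zero_mem, by simp⟩

lemma aux_rtendsto {x : ℕ → EuclideanSpace ℝ (Fin n)} (φ : ℕ → ℕ) (hφ : StrictMono φ)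
    (hr : ∀ k, 0 < dist (x k) a) (hxd : ∀ k : ℕ, dist (x k) a ≤ 1 / ((k : ℝ) + 1)) :
    Tendsto (fun k => dist (x (φ k)) a) atTop (𝓝[>] (0 : ℝ)) := by
  rw [tendsto_nhdsWithin_iff]
  constructor
  · apply squeeze_zero (fun k => (hr _).le) (fun k => ?_)
      tendsto_one_div_add_atTop_nhds_zero_nat
    calc dist (x (φ k)) a ≤ 1 / ((φ k : ℝ) + 1) := hxd _
      _ ≤ 1 / ((k : ℝ) + 1) := by
          apply one_div_le_one_div_of_le (by positivity)
          have h1 : (k : ℝ) ≤ (φ k : ℝ) := Nat.cast_le.2 hφ.le_apply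
          linarith
  · exact Eventually.of_forall fun k => hr _

/-- Key lemma A: points of `B` near `a` are close to `M`, quantitatively. -/
lemma aux_lemA (h2 : TanStarPt B a = (T : Set (EuclideanSpace ℝ (Fin n))))
    (hM : M = (fun v => a + v) '' (T : Set (EuclideanSpace ℝ (Fin n))))
    {ε : ℝ} (hε : 0 < ε) :
    ∃ δ > 0, ∀ x ∈ B, dist x a ≤ δ → Metric.infDist x M ≤ ε * dist x a := by
  by_contra h
  push_neg at h
  have haM : a ∈ M := aux_haM hM
  choose x hxB hxd hxM using fun k : ℕ => h (1 / ((k : ℝ) + 1)) (by positivity)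
  have hr : ∀ k, 0 < dist (x k) a := by
    intro k
    rcases dist_nonneg.lt_or_eq (a := (0:ℝ)) (b := dist (x k) a) with h' | h'
    · exact h'
    · exfalso
      have hx : x k = a := eq_of_dist_eq_zero h'.symm
      have h0 := hxM k
      rw [hx, dist_self, mul_zero, Metric.infDist_zero_of_mem haM] at h0
      exact lt_irrefl _ h0
  set r : ℕ → ℝ := fun k => dist (x k) a with hrdef
  set v : ℕ → EuclideanSpace ℝ (Fin n) := fun k => (r k)⁻¹ • (x k - a) with hvdef
  have hxv : ∀ k, x k - a = r k • v k := fun k => (smul_inv_smul₀ (hr k).ne' _).symm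
  have hv1 : ∀ k, v k ∈ Metric.sphere (0 : EuclideanSpace ℝ (Fin n)) 1 := by
    intro k
    rw [mem_sphere_zero_iff_norm, hvdef]
    rw [norm_smul, norm_inv, Real.norm_eq_abs, abs_of_pos (hr k), ← dist_eq_norm]
    exact inv_mul_cancel₀ (hr k).ne'
  obtain ⟨w, hw, φ, hφ, hconv⟩ :=
    (isCompact_sphere (0 : EuclideanSpace ℝ (Fin n)) 1).tendsto_subseq hv1
  have hrt : Tendsto (fun k => r (φ k)) atTop (𝓝[>] (0 : ℝ)) :=
    aux_rtendsto φ hφ hr hxd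
  -- distance computation
  have hdist : ∀ k, dist (a + r k • w) (x k) = r k * dist (v k) w := by
    intro k
    rw [dist_eq_norm, dist_eq_norm]
    have he : a + r k • w - x k = r k • (w - v k) := by
      rw [smul_sub, ← hxv]; abel
    rw [he, norm_smul, Real.norm_eq_abs, abs_of_pos (hr k), norm_sub_rev]
  have hconv' : ∀ ε' : ℝ, 0 < ε' → ∀ᶠ k in atTop, dist (v (φ k)) w < ε' := by
    intro ε' hε'
    have := hconv (Metric.ball_mem_nhds w hε')
    filter_upwards [this] with k hk
    exact Metric.mem_ball.1 hk
  have hwT : w ∈ TanStarPt B a := by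
    intro ε' hε'
    apply hrt.frequently
    apply Eventually.frequently
    filter_upwards [hconv' ε' hε'] with k hk
    have hle : Metric.infDist (a + r (φ k) • w) B ≤ dist (a + r (φ k) • w) (x (φ k)) :=
      Metric.infDist_le_dist_of_mem (hxB _)
    calc Metric.infDist (a + r (φ k) • w) B ≤ r (φ k) * dist (v (φ k)) w :=
          hle.trans_eq (hdist _)
      _ < r (φ k) * ε' := by
          exact mul_lt_mul_of_pos_left hk (hr _)
      _ = ε' * r (φ k) := mul_comm _ _
  have hwT' : w ∈ (T : Set (EuclideanSpace ℝ (Fin n))) := by rw [← h2]; exact hwT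
  have hεlt : ∀ k, ε < dist (v k) w := by
    intro k
    have hmem : a + r k • w ∈ M := by
      rw [hM]; exact ⟨r k • w, T.smul_mem _ hwT', rfl⟩
    have h1' : Metric.infDist (x k) M ≤ dist (x k) (a + r k • w) :=
      Metric.infDist_le_dist_of_mem hmem
    rw [dist_comm, hdist k] at h1'
    have h3 := (hxM k).trans_le h1'
    have := hr k
    nlinarith
  obtain ⟨k, hk⟩ := (hconv' ε hε).exists
  exact absurd hk (not_lt.2 (hεlt (φ k)).le)

/-- Key lemma B: points of `M` near `a` are close to `B`, quantitatively. -/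
lemma aux_lemB (ha : a ∈ closure B)
    (h1 : TanLowerPt B a = (T : Set (EuclideanSpace ℝ (Fin n))))
    (hM : M = (fun v => a + v) '' (T : Set (EuclideanSpace ℝ (Fin n))))
    {ε : ℝ} (hε : 0 < ε) :
    ∃ δ > 0, ∀ x ∈ M, dist x a ≤ δ → Metric.infDist x B ≤ ε * dist x a := by
  by_contra h
  push_neg at h
  have haB : Metric.infDist a B = 0 := by
    rw [← Metric.infDist_closure]; exact Metric.infDist_zero_of_mem ha
  choose x hxM hxd hxB using fun k : ℕ => h (1 / ((k : ℝ) + 1)) (by positivity)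
  have hr : ∀ k, 0 < dist (x k) a := by
    intro k
    rcases dist_nonneg.lt_or_eq (a := (0:ℝ)) (b := dist (x k) a) with h' | h'
    · exact h'
    · exfalso
      have hx : x k = a := eq_of_dist_eq_zero h'.symm
      have h0 := hxB k
      rw [hx, dist_self, mul_zero, haB] at h0
      exact lt_irrefl _ h0
  set r : ℕ → ℝ := fun k => dist (x k) a with hrdef
  set v : ℕ → EuclideanSpace ℝ (Fin n) := fun k => (r k)⁻¹ • (x k - a) with hvdef
  have hxv : ∀ k, x k - a = r k • v k := fun k => (smul_inv_smul₀ (hr k).ne' _).symm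
  have hxaT : ∀ k, x k - a ∈ T := by
    intro k
    have := hxM k
    rw [hM] at this
    obtain ⟨t, htT, ht⟩ := this
    have : x k - a = t := by rw [← ht]; simp
    rwa [this]
  have hv1 : ∀ k, v k ∈ Metric.sphere (0 : EuclideanSpace ℝ (Fin n)) 1 ∩
      (T : Set (EuclideanSpace ℝ (Fin n))) := by
    intro k
    constructor
    · rw [mem_sphere_zero_iff_norm, hvdef]
      rw [norm_smul, norm_inv, Real.norm_eq_abs, abs_of_pos (hr k), ← dist_eq_norm]
      exact inv_mul_cancel₀ (hr k).ne'
    · exact T.smul_mem _ (hxaT k)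
  have hcompact : IsCompact (Metric.sphere (0 : EuclideanSpace ℝ (Fin n)) 1 ∩
      (T : Set (EuclideanSpace ℝ (Fin n)))) :=
    (isCompact_sphere _ _).inter_right T.closed_of_finiteDimensional
  obtain ⟨w, hw, φ, hφ, hconv⟩ := hcompact.tendsto_subseq hv1
  have hrt : Tendsto (fun k => r (φ k)) atTop (𝓝[>] (0 : ℝ)) :=
    aux_rtendsto φ hφ hr hxd
  have hconv' : ∀ ε' : ℝ, 0 < ε' → ∀ᶠ k in atTop, dist (v (φ k)) w < ε' := by
    intro ε' hε'
    have := hconv (Metric.ball_mem_nhds w hε')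
    filter_upwards [this] with k hk
    exact Metric.mem_ball.1 hk
  have hdist : ∀ k, dist (x k) (a + r k • w) = r k * dist (v k) w := by
    intro k
    rw [dist_eq_norm, dist_eq_norm]
    have he : x k - (a + r k • w) = r k • (v k - w) := by
      rw [smul_sub, ← hxv]; abel
    rw [he, norm_smul, Real.norm_eq_abs, abs_of_pos (hr k)]
  have hwLow : w ∈ TanLowerPt B a := by rw [h1]; exact hw.2
  have hev := hrt.eventually (hwLow (ε / 2) (half_pos hε))
  obtain ⟨k, hk1, hk2⟩ := (hev.and (hconv' (ε / 2) (half_pos hε))).exists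
  have hbound : Metric.infDist (x (φ k)) B ≤
      Metric.infDist (a + r (φ k) • w) B + dist (x (φ k)) (a + r (φ k) • w) :=
    Metric.infDist_le_infDist_add_dist
  rw [hdist] at hbound
  have h3 := (hxB (φ k)).trans_le hbound
  have := hr (φ k)
  nlinarith

end Aux

theorem stmt19 {m n : ℕ} (hmn : m ≤ n) (B : Set (EuclideanSpace ℝ (Fin n)))
    (a : EuclideanSpace ℝ (Fin n)) (ha : a ∈ closure B)
    (T : Submodule ℝ (EuclideanSpace ℝ (Fin n))) (hT : Module.finrank ℝ T = m)
    (h1 : TanLowerPt B a = (T : Set (EuclideanSpace ℝ (Fin n))))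
    (h2 : TanStarPt B a = (T : Set (EuclideanSpace ℝ (Fin n))))
    (M : Set (EuclideanSpace ℝ (Fin n)))
    (hM : M = (fun v => a + v) '' (T : Set (EuclideanSpace ℝ (Fin n)))) :
    (∀ ε : ℝ, 0 < ε → ∀ᶠ r in 𝓝[>] (0 : ℝ),
      ∀ x ∈ Metric.closedBall a r, |Metric.infDist x M - Metric.infDist x B| ≤ ε * r) ∧
    (∀ ε : ℝ, 0 < ε → ∀ᶠ r in 𝓝[>] (0 : ℝ),
      ∀ x ∈ Metric.closedBall a r ∩ B, Metric.infDist x M ≤ ε * r) := by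
  have haM : a ∈ M := aux_haM hM
  have hBne : B.Nonempty := Set.Nonempty.of_closure ⟨a, ha⟩
  have hMne : M.Nonempty := ⟨a, haM⟩
  have hinfB_le : ∀ x, Metric.infDist x B ≤ dist x a := by
    intro x
    rw [← Metric.infDist_closure]
    exact Metric.infDist_le_dist_of_mem ha
  constructor
  · -- part (i)
    intro ε hε
    have hε' : (0:ℝ) < ε / (2 * (3 + ε)) := by positivity
    obtain ⟨δ₁, hδ₁, hA⟩ := aux_lemA h2 hM hε'
    obtain ⟨δ₂, hδ₂, hB⟩ := aux_lemB ha h1 hM hε'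
    set ε' := ε / (2 * (3 + ε)) with hε'def
    have hδ : (0:ℝ) < min δ₁ δ₂ / (3 + ε) := by positivity
    filter_upwards [Ioo_mem_nhdsGT_of_mem ⟨le_refl 0, hδ⟩] with r hr x hx
    obtain ⟨hr0, hrδ⟩ := hr
    have hxa : dist x a ≤ r := Metric.mem_closedBall.1 hx
    have hkey : (3 + ε) * r ≤ min δ₁ δ₂ := by
      have := (lt_div_iff₀ (by positivity : (0:ℝ) < 3 + ε)).1 hrδ
      nlinarith
    have hε'bound : ε' * ((2 + ε / 2) * r) ≤ ε / 2 * r := by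
      rw [hε'def]
      rw [div_mul_eq_mul_div, div_le_iff₀ (by positivity)]
      nlinarith [mul_nonneg (mul_nonneg hε.le hr0.le) (by positivity : (0:ℝ) ≤ 1 + ε / 2)]
    -- direction 1 : infDist x B ≤ infDist x M + ε * r
    have dir1 : Metric.infDist x B ≤ Metric.infDist x M + ε * r := by
      have hxM : Metric.infDist x M ≤ r := (Metric.infDist_le_dist_of_mem haM).trans hxa
      have hlt : Metric.infDist x M < Metric.infDist x M + ε * r / 2 := by
        have : 0 < ε * r / 2 := by positivity
        linarith
      obtain ⟨y, hyM, hy⟩ := (Metric.infDist_lt_iff hMne).1 hlt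
      have hya : dist y a ≤ (2 + ε / 2) * r := by
        have := dist_triangle y x a
        rw [dist_comm y x] at this
        nlinarith
      have hya' : dist y a ≤ δ₂ := by
        have h2r : (2 + ε / 2) * r ≤ (3 + ε) * r := by nlinarith
        linarith [min_le_right δ₁ δ₂, hya.trans (h2r.trans hkey)]
      have hyB : Metric.infDist y B ≤ ε' * dist y a := hB y hyM hya'
      have hyB' : Metric.infDist y B ≤ ε / 2 * r := by
        calc Metric.infDist y B ≤ ε' * dist y a := hyB
          _ ≤ ε' * ((2 + ε / 2) * r) := by
              apply mul_le_mul_of_nonneg_left hya hε'.le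
          _ ≤ ε / 2 * r := hε'bound
      calc Metric.infDist x B ≤ Metric.infDist y B + dist x y :=
            Metric.infDist_le_infDist_add_dist
        _ ≤ ε / 2 * r + (Metric.infDist x M + ε * r / 2) := by
            have := hy.le; linarith
        _ = Metric.infDist x M + ε * r := by ring
    -- direction 2 : infDist x M ≤ infDist x B + ε * r
    have dir2 : Metric.infDist x M ≤ Metric.infDist x B + ε * r := by
      have hxB : Metric.infDist x B ≤ r := (hinfB_le x).trans hxa
      have hlt : Metric.infDist x B < Metric.infDist x B + ε * r / 2 := by
        have : 0 < ε * r / 2 := by positivity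
        linarith
      obtain ⟨z, hzB, hz⟩ := (Metric.infDist_lt_iff hBne).1 hlt
      have hza : dist z a ≤ (2 + ε / 2) * r := by
        have := dist_triangle z x a
        rw [dist_comm z x] at this
        nlinarith
      have hza' : dist z a ≤ δ₁ := by
        have h2r : (2 + ε / 2) * r ≤ (3 + ε) * r := by nlinarith
        linarith [min_le_left δ₁ δ₂, hza.trans (h2r.trans hkey)]
      have hzM : Metric.infDist z M ≤ ε' * dist z a := hA z hzB hza'
      have hzM' : Metric.infDist z M ≤ ε / 2 * r := by
        calc Metric.infDist z M ≤ ε' * dist z a := hzM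
          _ ≤ ε' * ((2 + ε / 2) * r) := by
              apply mul_le_mul_of_nonneg_left hza hε'.le
          _ ≤ ε / 2 * r := hε'bound
      calc Metric.infDist x M ≤ Metric.infDist z M + dist x z :=
            Metric.infDist_le_infDist_add_dist
        _ ≤ ε / 2 * r + (Metric.infDist x B + ε * r / 2) := by
            have := hz.le; linarith
        _ = Metric.infDist x B + ε * r := by ring
    rw [abs_le]
    constructor <;> linarith
  · -- part (ii)
    intro ε hε
    obtain ⟨δ, hδ, hA⟩ := aux_lemA h2 hM hε
    filter_upwards [Ioo_mem_nhdsGT_of_mem ⟨le_refl 0, hδ⟩] with r hr x hx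
    obtain ⟨hx1, hx2⟩ := hx
    have hxa : dist x a ≤ r := Metric.mem_closedBall.1 hx1
    calc Metric.infDist x M ≤ ε * dist x a := hA x hx2 (hxa.trans hr.2.le)
      _ ≤ ε * r := mul_le_mul_of_nonneg_left hxa hε.le
end
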